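/- arXiv:2109.09511 — 4 statements merged into one kernel-verified Lean document; each statement's English description precedes it below -/
import Mathlib

section
/- For a rooted symmetric tree with daughter degree sequence (k_1,...,k_{q-1}), all k_i ≥ 1, and for any sequence (x_1,...,x_{r-1}) with 0 ≤ x_i ≤ k_i - 1 and r odd with 3 ≤ r ≤ q, the value x_2 h_3 + x_3 h_4 + ... + x_{r-1} h_r + (r-1)/2 is at most h_2, where h_i = 1 + k_i h_{i+1} and h_q = 1. -/
/-!
Since `h i = 1 + k i * h (i + 1)`, the sum `∑_{a ≤ i < r} (k i - 1) * h (i + 1)` telescopes to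
`h a - h r - (r - a)`. Bounding each `x i` by `k i - 1` and `h r` by `1` gives
`∑ x i * h (i + 1) + (r - 2) + 1 ≤ h 2`, and `(r - 1) / 2 ≤ r - 1`.
-/

/-- The `i`-th level vertex size of a rooted symmetric tree with `q` levels and
daughter degree sequence `k 1, …, k (q-1)`:
`h i = 1 + ∑_{j=i}^{q-1} k i * k (i+1) * ⋯ * k j`, so `h q = 1`. -/
def hlvl (q : ℕ) (k : ℕ → ℕ) (i : ℕ) : ℕ :=
  1 + ∑ j ∈ Finset.Icc i (q - 1), ∏ t ∈ Finset.Icc i j, k t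

open Finset

lemma one_le_hlvl (q : ℕ) (k : ℕ → ℕ) (i : ℕ) : 1 ≤ hlvl q k i :=
  Nat.le_add_right 1 _

lemma hlvl_eq_one_add_mul {q : ℕ} (k : ℕ → ℕ) {i : ℕ} (hiq : i < q) :
    hlvl q k i = 1 + k i * hlvl q k (i + 1) := by
  have prod_Icc_eq (j : ℕ) (hij : i ≤ j) :
      ∏ t ∈ Icc i j, k t = k i * ∏ t ∈ Icc (i + 1) j, k t := by
    rw [← Ioc_insert_left hij, prod_insert (by simp), ← Icc_add_one_left_eq_Ioc]
  unfold hlvl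
  rw [← Ioc_insert_left (by omega : i ≤ q - 1), sum_insert (by simp), Icc_self,
    prod_singleton, ← Icc_add_one_left_eq_Ioc,
    sum_congr rfl fun j hj => prod_Icc_eq j (by simp at hj; omega), ← mul_sum]
  ring

lemma sum_Ico_sub_one_mul_hlvl_add {q : ℕ} {k : ℕ → ℕ} (hk : ∀ i, 1 ≤ k i) {a r : ℕ}
    (har : a ≤ r) (hrq : r ≤ q) :
    ∑ i ∈ Ico a r, (k i - 1) * hlvl q k (i + 1) + (r - a) + hlvl q k r = hlvl q k a := by
  induction r, har using Nat.le_induction with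
  | base => simp
  | succ r har ih =>
    have hsplit : (k r - 1) * hlvl q k (r + 1) + hlvl q k (r + 1) = k r * hlvl q k (r + 1) := by
      rw [← Nat.succ_mul, Nat.succ_eq_add_one, Nat.sub_add_cancel (hk r)]
    rw [sum_Ico_succ_top har, ← ih (by omega), hlvl_eq_one_add_mul k (by omega : r < q),
      ← hsplit]
    omega

lemma sum_Ico_mul_hlvl_add_le {q : ℕ} {k : ℕ → ℕ} (hk : ∀ i, 1 ≤ k i) {a r : ℕ}
    (har : a ≤ r) (hrq : r ≤ q) (x : ℕ → ℕ) (hx : ∀ i ∈ Ico a r, x i ≤ k i - 1) :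
    ∑ i ∈ Ico a r, x i * hlvl q k (i + 1) + (r - a) + 1 ≤ hlvl q k a := by
  calc ∑ i ∈ Ico a r, x i * hlvl q k (i + 1) + (r - a) + 1
      ≤ ∑ i ∈ Ico a r, (k i - 1) * hlvl q k (i + 1) + (r - a) + hlvl q k r := by
        gcongr with i hi
        exacts [hx i hi, one_le_hlvl q k r]
    _ = hlvl q k a := sum_Ico_sub_one_mul_hlvl_add hk har hrq

theorem odd_tail_le_h_two_general (q : ℕ) (k : ℕ → ℕ) (hk : ∀ i, 1 ≤ k i)
    (r : ℕ) (hr : 3 ≤ r) (hrq : r ≤ q)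
    (x : ℕ → ℕ) (hx : ∀ i ∈ Finset.Icc 2 (r - 1), x i ≤ k i - 1) :
    ∑ i ∈ Finset.Icc 2 (r - 1), x i * hlvl q k (i + 1) + (r - 1) / 2 ≤ hlvl q k 2 := by
  have hIcc : Icc 2 (r - 1) = Ico 2 r := by
    rw [← Ico_add_one_right_eq_Icc, Nat.sub_add_cancel (by omega)]
  rw [hIcc] at hx ⊢
  have hbound := sum_Ico_mul_hlvl_add_le hk (by omega : 2 ≤ r) hrq x hx
  omega

/-- For odd `r` with `3 ≤ r ≤ q` and admissible `x_i ≤ k i - 1`, the value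
`x_2 h_3 + x_3 h_4 + ⋯ + x_{r-1} h_r + (r-1)/2` is at most `h_2`. -/
theorem odd_tail_le_h_two (q : ℕ) (k : ℕ → ℕ) (hk : ∀ i, 1 ≤ k i)
    (r : ℕ) (hodd : Odd r) (hr : 3 ≤ r) (hrq : r ≤ q)
    (x : ℕ → ℕ) (hx : ∀ i ∈ Finset.Icc 2 (r - 1), x i ≤ k i - 1) :
    ∑ i ∈ Finset.Icc 2 (r - 1), x i * hlvl q k (i + 1) + (r - 1) / 2 ≤ hlvl q k 2 :=
  odd_tail_le_h_two_general q k hk r hr hrq x hx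
end

section
/- With T and f as above, the induced edge labelling g(uv) = |f(u) - f(v)| is an injective map from the edge set of T onto {1, 2, ..., h_1 - 1}; hence f is a graceful labelling of every rooted symmetric tree. -/
/-- The vertex set of a rooted symmetric tree with `q` levels: a vertex at level
`r.val + 1` is identified with its sequence of child indices `(x_1, …, x_{r.val})`
where `0 ≤ x_i < k i`. -/
def Vertex (q : ℕ) (k : ℕ → ℕ) : Type :=
  Σ r : Fin q, (i : Fin r.val) → Fin (k (i.val + 1))

instance (q : ℕ) (k : ℕ → ℕ) : Fintype (Vertex q k) := by
  unfold Vertex; infer_instance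

instance (q : ℕ) (k : ℕ → ℕ) : DecidableEq (Vertex q k) := by
  unfold Vertex; infer_instance

/-- The (1-based) child-index sequence of a vertex, extended by `0`. -/
def seqOf {q : ℕ} {k : ℕ → ℕ} (v : Vertex q k) (i : ℕ) : ℕ :=
  if h : i - 1 < v.1.val then (v.2 ⟨i - 1, h⟩).val else 0

/-- Level of a vertex (root has level 1). -/
def level {q : ℕ} {k : ℕ → ℕ} (v : Vertex q k) : ℕ := v.1.val + 1

/-- Odd-level value of the labelling of Theorem 1. -/
def fOdd (q : ℕ) (k : ℕ → ℕ) (x : ℕ → ℕ) (r : ℕ) : ℕ :=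
  ∑ i ∈ Finset.Icc 1 (r - 1), x i * hlvl q k (i + 1) + (r - 1) / 2

/-- Even-level value of the labelling of Theorem 1. -/
def fEven (q : ℕ) (k : ℕ → ℕ) (x : ℕ → ℕ) (r : ℕ) : ℕ :=
  (k 1 - x 1) * hlvl q k 2
    - ∑ i ∈ Finset.Icc 2 (r - 1), x i * hlvl q k (i + 1) - (r - 2) / 2

/-- The vertex labelling `f` of Theorem 1. -/
def flabel (q : ℕ) (k : ℕ → ℕ) (v : Vertex q k) : ℕ :=
  if Even (level v) then fEven q k (seqOf v) (level v) else fOdd q k (seqOf v) (level v)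

/-- The parent of a vertex (the root is mapped to itself). -/
def parent {q : ℕ} {k : ℕ → ℕ} (v : Vertex q k) : Vertex q k :=
  ⟨⟨v.1.val - 1, by have := v.1.isLt; omega⟩,
    fun i => v.2 (Fin.castLE (Nat.sub_le _ _) i)⟩

/-- The induced edge label on the edge joining `v` (non-root) to its parent. -/
def glabel (q : ℕ) (k : ℕ → ℕ) (v : Vertex q k) : ℕ :=
  ((flabel q k v : ℤ) - (flabel q k (parent v) : ℤ)).natAbs

/- ======================== auxiliary development ======================== -/

namespace GracefulAux

/-- Shift of the degree sequence. -/
def shf (k : ℕ → ℕ) : ℕ → ℕ := fun i => k (i + 1)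

lemma sum_Icc_bot {M : Type*} [AddCommMonoid M] {a b : ℕ} (h : a ≤ b) (f : ℕ → M) :
    ∑ i ∈ Finset.Icc a b, f i = f a + ∑ i ∈ Finset.Icc (a+1) b, f i := by
  rw [show Finset.Icc a b = insert a (Finset.Icc (a+1) b) by
        ext x; simp only [Finset.mem_Icc, Finset.mem_insert]; omega,
      Finset.sum_insert (by simp [Finset.mem_Icc])]

lemma sum_Icc_shift {M : Type*} [AddCommMonoid M] (a b : ℕ) (f : ℕ → M) :
    ∑ i ∈ Finset.Icc (a+1) (b+1), f i = ∑ i ∈ Finset.Icc a b, f (i+1) := by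
  rw [← Finset.map_add_right_Icc a b 1, Finset.sum_map]
  rfl

lemma prod_Icc_shift {M : Type*} [CommMonoid M] (a b : ℕ) (f : ℕ → M) :
    ∏ i ∈ Finset.Icc (a+1) (b+1), f i = ∏ i ∈ Finset.Icc a b, f (i+1) := by
  rw [← Finset.map_add_right_Icc a b 1, Finset.prod_map]
  rfl

lemma hlvl_one_le (q : ℕ) (k : ℕ → ℕ) (i : ℕ) : 1 ≤ hlvl q k i :=
  Nat.le_add_right 1 _

lemma prod_Icc_bot {M : Type*} [CommMonoid M] {a b : ℕ} (h : a ≤ b) (f : ℕ → M) :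
    ∏ i ∈ Finset.Icc a b, f i = f a * ∏ i ∈ Finset.Icc (a+1) b, f i := by
  rw [show Finset.Icc a b = insert a (Finset.Icc (a+1) b) by
        ext x; simp only [Finset.mem_Icc, Finset.mem_insert]; omega,
      Finset.prod_insert (by simp [Finset.mem_Icc])]

lemma hlvl_succ (q : ℕ) (k : ℕ → ℕ) (i : ℕ) (hi : i < q) :
    hlvl q k i = 1 + k i * hlvl q k (i + 1) := by
  unfold hlvl
  rw [sum_Icc_bot (by omega : i ≤ q - 1), Finset.Icc_self, Finset.prod_singleton,
      Nat.mul_add, Nat.mul_one, Finset.mul_sum]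
  have : ∀ j ∈ Finset.Icc (i+1) (q-1),
      ∏ t ∈ Finset.Icc i j, k t = k i * ∏ t ∈ Finset.Icc (i+1) j, k t := by
    intro j hj
    rw [Finset.mem_Icc] at hj
    exact prod_Icc_bot (by omega) k
  rw [Finset.sum_congr rfl this]

lemma hlvl_shift (q : ℕ) (k : ℕ → ℕ) (hq : 2 ≤ q) (i : ℕ) :
    hlvl (q-1) (shf k) i = hlvl q k (i+1) := by
  unfold hlvl
  congr 1
  rw [show q - 1 = (q - 2) + 1 by omega, sum_Icc_shift]
  rw [Nat.add_sub_cancel]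
  refine Finset.sum_congr rfl ?_
  intro j hj
  show ∏ t ∈ Finset.Icc i j, k (t+1) = ∏ t ∈ Finset.Icc (i + 1) (j + 1), k t
  rw [prod_Icc_shift]

/-- Sum bound. -/
lemma sum_bound (q : ℕ) (k : ℕ → ℕ) (x : ℕ → ℕ) (a : ℕ) (ha : 1 ≤ a) :
    ∀ b, a ≤ b + 1 → b ≤ q - 1 → (∀ i, a ≤ i → i ≤ b → x i + 1 ≤ k i) →
    ∑ i ∈ Finset.Icc a b, x i * hlvl q k (i+1) + hlvl q k (b+1) + (b + 1 - a)
      ≤ hlvl q k a := by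
  intro b
  induction b with
  | zero =>
    intro hab hbq hx
    have ha1 : a = 1 := by omega
    subst ha1
    simp [Finset.Icc_eq_empty_of_lt]
  | succ b ih =>
    intro hab hbq hx
    rcases Nat.lt_or_ge b.succ a with hlt | hge
    · -- a = b + 2 : empty sum
      have he : Finset.Icc a (b+1) = ∅ := Finset.Icc_eq_empty_of_lt (by omega)
      rw [he]
      simp only [Finset.sum_empty, Nat.zero_add]
      have : a = b + 2 := by omega
      subst this
      simp
    · rw [Finset.sum_Icc_succ_top (by omega) _]
      have ihb := ih (by omega) (by omega) (fun i h1 h2 => hx i h1 (by omega))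
      have hq1 : b + 1 < q := by omega
      have hs : hlvl q k (b+1) = 1 + k (b+1) * hlvl q k (b+2) := hlvl_succ q k (b+1) hq1
      have hxb : x (b+1) + 1 ≤ k (b+1) := hx (b+1) (by omega) (by omega)
      have hmul : (x (b+1) + 1) * hlvl q k (b+2) ≤ k (b+1) * hlvl q k (b+2) :=
        Nat.mul_le_mul_right _ hxb
      rw [Nat.add_mul, Nat.one_mul] at hmul
      have ee : hlvl q k (b+1+1) = hlvl q k (b+2) := rfl
      have ee2 : x (b+1) * hlvl q k (b+1+1) = x (b+1) * hlvl q k (b+2) := rfl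
      omega

/-- No-truncation bound for the even-level formula. -/
lemma tail_bound (q : ℕ) (k : ℕ → ℕ) (x : ℕ → ℕ) (r : ℕ) (hr2 : 2 ≤ r) (hrq : r ≤ q)
    (hx : ∀ i, 2 ≤ i → i ≤ r - 1 → x i + 1 ≤ k i) :
    ∑ i ∈ Finset.Icc 2 (r-1), x i * hlvl q k (i+1) + (r-2)/2 + 1 ≤ hlvl q k 2 := by
  rcases Nat.lt_or_ge r 3 with h3 | h3
  · have : r = 2 := by omega
    subst this
    simp [Finset.Icc_eq_empty_of_lt, hlvl_one_le]
  · have hsb := sum_bound q k x 2 (by omega) (r-1) (by omega) (by omega) hx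
    rw [show r - 1 + 1 = r by omega] at hsb
    have h1 := hlvl_one_le q k r
    omega

/- ---------- basic vertex lemmas ---------- -/

section vertex
variable {q : ℕ} {k : ℕ → ℕ}

lemma seqOf_lt_k (hk : ∀ i, 1 ≤ k i) (v : Vertex q k) (i : ℕ) (hi : 1 ≤ i) :
    seqOf v i + 1 ≤ k i := by
  unfold seqOf
  split
  · rename_i h
    have hlt : (v.2 ⟨i-1, h⟩).val < k (i - 1 + 1) := (v.2 ⟨i-1, h⟩).isLt
    have e : k (i - 1 + 1) = k i := by congr 1; omega
    omega
  · exact hk i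

lemma seqOf_of_ge (v : Vertex q k) (i : ℕ) (hi : ¬ (i - 1 < v.1.val)) :
    seqOf v i = 0 := dif_neg hi

lemma vertex_ext {v w : Vertex q k} (h1 : v.1.val = w.1.val)
    (h2 : ∀ i, seqOf v (i+1) = seqOf w (i+1)) : v = w := by
  rcases v with ⟨⟨rv, hv⟩, xv⟩
  rcases w with ⟨⟨rw', hw⟩, xw⟩
  simp only at h1
  subst h1
  have : xv = xw := by
    funext i
    have h := h2 i.val
    have hi2 : i.val < rv := i.isLt
    have hiv : i.val + 1 - 1 < rv := by omega
    simp only [seqOf, dif_pos hiv] at h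
    apply Fin.ext
    exact h
  subst this
  rfl

lemma flabel_of_fst_zero (v : Vertex q k) (hv : v.1.val = 0) : flabel q k v = 0 := by
  have hl : level v = 1 := by unfold level; omega
  rw [flabel, hl]
  simp [fOdd, Finset.Icc_eq_empty_of_lt]

end vertex

/- ---------- down / up ---------- -/

section updown
variable {q : ℕ} {k : ℕ → ℕ}

def dn (hq : 2 ≤ q) (v : Vertex q k) : Vertex (q-1) (shf k) :=
  ⟨⟨v.1.val - 1, by have := v.1.isLt; omega⟩,
    fun i => v.2 ⟨i.val + 1, by have h1 : i.val < v.1.val - 1 := i.isLt; omega⟩⟩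

@[simp] lemma dn_fst (hq : 2 ≤ q) (v : Vertex q k) : (dn hq v).1.val = v.1.val - 1 := rfl

lemma snd_val_congr (v : Vertex q k) {a b : ℕ} (ha : a < v.1.val) (hb : b < v.1.val)
    (hab : a = b) : (v.2 ⟨a, ha⟩).val = (v.2 ⟨b, hb⟩).val := by subst hab; rfl

lemma seqOf_dn (hq : 2 ≤ q) (v : Vertex q k) (i : ℕ) (hi : 1 ≤ i) :
    seqOf (dn hq v) i = seqOf v (i+1) := by
  by_cases h : i - 1 < v.1.val - 1
  · have h2 : i + 1 - 1 < v.1.val := by omega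
    have e1 : seqOf (dn hq v) i = ((dn hq v).2 ⟨i-1, h⟩).val := dif_pos h
    have e2 : seqOf v (i+1) = (v.2 ⟨i+1-1, h2⟩).val := dif_pos h2
    rw [e1, e2]
    exact snd_val_congr v (a := i - 1 + 1) (b := i + 1 - 1) (by omega) h2 (by omega)
  · have h2 : ¬ (i + 1 - 1 < v.1.val) := by omega
    rw [seqOf_of_ge _ _ h, seqOf_of_ge _ _ h2]

def upv (hq : 2 ≤ q) (j : ℕ) (hj : j < k 1) (v' : Vertex (q-1) (shf k)) : Vertex q k :=
  ⟨⟨v'.1.val + 1, by have := v'.1.isLt; omega⟩,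
    fun i => match i with
      | ⟨0, _⟩ => ⟨j, hj⟩
      | ⟨n+1, h⟩ => v'.2 ⟨n, by have h1 : n + 1 < v'.1.val + 1 := h; omega⟩⟩

@[simp] lemma upv_fst (hq : 2 ≤ q) (j : ℕ) (hj : j < k 1) (v' : Vertex (q-1) (shf k)) :
    (upv hq j hj v').1.val = v'.1.val + 1 := rfl

lemma seqOf_upv_one (hq : 2 ≤ q) (j : ℕ) (hj : j < k 1) (v' : Vertex (q-1) (shf k)) :
    seqOf (upv hq j hj v') 1 = j := by
  have h : (1:ℕ) - 1 < (upv hq j hj v').1.val := by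
    have : (upv hq j hj v').1.val = v'.1.val + 1 := rfl
    omega
  have e1 : seqOf (upv hq j hj v') 1 = ((upv hq j hj v').2 ⟨1-1, h⟩).val := dif_pos h
  rw [e1]
  rfl

lemma seqOf_upv_succ (hq : 2 ≤ q) (j : ℕ) (hj : j < k 1) (v' : Vertex (q-1) (shf k))
    (i : ℕ) (hi : 1 ≤ i) :
    seqOf (upv hq j hj v') (i+1) = seqOf v' i := by
  obtain ⟨n, rfl⟩ : ∃ n, i = n + 1 := ⟨i - 1, by omega⟩
  by_cases h : n < v'.1.val
  · have h1 : n + 1 + 1 - 1 < (upv hq j hj v').1.val := by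
      have : (upv hq j hj v').1.val = v'.1.val + 1 := rfl
      omega
    have h2 : n + 1 - 1 < v'.1.val := by omega
    have e1 : seqOf (upv hq j hj v') (n+1+1) = ((upv hq j hj v').2 ⟨n+1+1-1, h1⟩).val :=
      dif_pos h1
    have e2 : seqOf v' (n+1) = (v'.2 ⟨n+1-1, h2⟩).val := dif_pos h2
    rw [e1, e2]
    show (v'.2 ⟨n, _⟩).val = _
    exact snd_val_congr v' (by omega) h2 (by omega)
  · have h1 : ¬ (n + 1 + 1 - 1 < (upv hq j hj v').1.val) := by
      have : (upv hq j hj v').1.val = v'.1.val + 1 := rfl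
      omega
    have h2 : ¬ (n + 1 - 1 < v'.1.val) := by omega
    rw [seqOf_of_ge _ _ h1, seqOf_of_ge _ _ h2]

lemma dn_upv (hq : 2 ≤ q) (j : ℕ) (hj : j < k 1) (v' : Vertex (q-1) (shf k)) :
    dn hq (upv hq j hj v') = v' := by
  apply vertex_ext (by simp)
  intro i
  rw [seqOf_dn hq _ (i+1) (by omega), seqOf_upv_succ hq j hj v' (i+1) (by omega)]

lemma seqOf_parent_lt (v : Vertex q k) (i : ℕ) (h : i - 1 < v.1.val - 1) :
    seqOf (parent v) i = seqOf v i := by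
  unfold seqOf parent
  rw [dif_pos (by exact h : i - 1 < v.1.val - 1), dif_pos (by omega : i - 1 < v.1.val)]
  rfl

lemma seqOf_parent_ge (v : Vertex q k) (i : ℕ) (h : ¬ (i - 1 < v.1.val - 1)) :
    seqOf (parent v) i = 0 := by
  unfold seqOf parent
  rw [dif_neg (by exact h)]

lemma dn_parent (hq : 2 ≤ q) (v : Vertex q k) (hv : 2 ≤ v.1.val) :
    dn hq (parent v) = parent (dn hq v) := by
  have hfst : (parent (dn hq v)).1.val = v.1.val - 1 - 1 := rfl
  have hfst2 : (dn hq (parent v)).1.val = v.1.val - 1 - 1 := rfl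
  apply vertex_ext (by omega)
  intro i
  rw [seqOf_dn hq _ (i+1) (by omega)]
  by_cases h : i < v.1.val - 2
  · rw [seqOf_parent_lt v (i+2) (by omega),
        seqOf_parent_lt (dn hq v) (i+1) (by
          have : (dn hq v).1.val = v.1.val - 1 := rfl
          omega),
        seqOf_dn hq v (i+1) (by omega)]
  · rw [seqOf_parent_ge v (i+2) (by omega),
        seqOf_parent_ge (dn hq v) (i+1) (by
          have : (dn hq v).1.val = v.1.val - 1 := rfl
          omega)]

lemma parent_upv (hq : 2 ≤ q) (j : ℕ) (hj : j < k 1) (v' : Vertex (q-1) (shf k))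
    (hv' : 0 < v'.1.val) :
    parent (upv hq j hj v') = upv hq j hj (parent v') := by
  have hfst : (parent (upv hq j hj v')).1.val = v'.1.val + 1 - 1 := rfl
  have hfst2 : (upv hq j hj (parent v')).1.val = (parent v').1.val + 1 := rfl
  have hfst3 : (parent v').1.val = v'.1.val - 1 := rfl
  have hup : (upv hq j hj v').1.val = v'.1.val + 1 := rfl
  apply vertex_ext (by omega)
  intro i
  rcases Nat.eq_zero_or_pos i with h0 | h0
  · subst h0
    rw [seqOf_parent_lt _ 1 (by omega), seqOf_upv_one, seqOf_upv_one]
  · obtain ⟨n, rfl⟩ : ∃ n, i = n + 1 := ⟨i - 1, by omega⟩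
    rw [seqOf_upv_succ hq j hj _ (n+1) (by omega)]
    by_cases h : n < v'.1.val - 1
    · rw [seqOf_parent_lt _ (n+2) (by omega),
          seqOf_upv_succ hq j hj v' (n+1) (by omega),
          seqOf_parent_lt v' (n+1) (by omega)]
    · rw [seqOf_parent_ge _ (n+2) (by omega),
          seqOf_parent_ge v' (n+1) (by omega)]

end updown

/- ---------- the key recurrence ---------- -/

/-- first-digit/parity block index. -/
def cOf {q : ℕ} {k : ℕ → ℕ} (v : Vertex q k) : ℕ :=
  if Even (level v) then k 1 - 1 - seqOf v 1 else seqOf v 1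

lemma sum_seq_dn {q : ℕ} {k : ℕ → ℕ} (hq : 2 ≤ q) (v : Vertex q k) (a b : ℕ)
    (ha : 1 ≤ a) :
    ∑ i ∈ Finset.Icc a b, seqOf (dn hq v) i * hlvl (q-1) (shf k) (i+1)
      = ∑ i ∈ Finset.Icc (a+1) (b+1), seqOf v i * hlvl q k (i+1) := by
  rw [sum_Icc_shift]
  refine Finset.sum_congr rfl ?_
  intro i hi
  rw [Finset.mem_Icc] at hi
  rw [seqOf_dn hq v i (by omega), hlvl_shift q k hq (i+1)]

lemma key (q : ℕ) (k : ℕ → ℕ) (hq : 2 ≤ q) (hk : ∀ i, 1 ≤ k i)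
    (v : Vertex q k) (hv : 0 < v.1.val) :
    flabel q k v + flabel (q-1) (shf k) (dn hq v) = (1 + cOf v) * hlvl q k 2 := by
  set N := v.1.val with hN
  have hNq : N < q := v.1.isLt
  have hlv : level v = N + 1 := rfl
  have hld : level (dn hq v) = N := by
    show (dn hq v).1.val + 1 = N
    have : (dn hq v).1.val = v.1.val - 1 := rfl
    omega
  have hk' : ∀ i, 1 ≤ shf k i := fun i => hk (i+1)
  have hs1 : seqOf v 1 + 1 ≤ k 1 := seqOf_lt_k hk v 1 (by omega)
  by_cases hpar : Even (level v)
  · -- level v = N+1 even, dn v at odd level N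
    have hpard : ¬ Even (level (dn hq v)) := by
      rw [hld]; rw [hlv] at hpar
      simp only [Nat.even_add_one] at hpar
      simpa using hpar
    rw [flabel, if_pos hpar, flabel, if_neg hpard, hlv, hld, cOf, if_pos hpar]
    rw [fEven, fOdd]
    have hsum : ∑ i ∈ Finset.Icc 1 (N-1), seqOf (dn hq v) i * hlvl (q-1) (shf k) (i+1)
        = ∑ i ∈ Finset.Icc 2 (N+1-1), seqOf v i * hlvl q k (i+1) := by
      rw [sum_seq_dn hq v 1 (N-1) le_rfl]
      refine Finset.sum_congr ?_ (fun x _ => rfl)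
      ext x
      simp only [Finset.mem_Icc]
      omega
    rw [hsum]
    set T := ∑ i ∈ Finset.Icc 2 (N+1-1), seqOf v i * hlvl q k (i+1) with hT
    have hNT : T + (N+1-2)/2 + 1 ≤ hlvl q k 2 := by
      have := tail_bound q k (seqOf v) (N+1) (by omega) (by omega)
        (fun i h1 h2 => seqOf_lt_k hk v i (by omega))
      omega
    have hfac : 1 + (k 1 - 1 - seqOf v 1) = k 1 - seqOf v 1 := by omega
    rw [hfac]
    have hge : hlvl q k 2 ≤ (k 1 - seqOf v 1) * hlvl q k 2 :=
      Nat.le_mul_of_pos_left _ (by omega)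
    have hdiv : (N - 1)/2 = (N+1-2)/2 := by omega
    rw [hdiv]
    omega
  · -- level v = N+1 odd, so N even, N ≥ 2; dn v at even level N
    have hNe : N % 2 = 0 := by
      rw [hlv] at hpar
      simp only [Nat.even_add_one, not_not] at hpar
      exact Nat.even_iff.mp hpar
    have hN2 : 2 ≤ N := by omega
    have hq3 : 3 ≤ q := by omega
    have hpard : Even (level (dn hq v)) := by
      rw [hld]; exact Nat.even_iff.mpr hNe
    rw [flabel, if_neg hpar, flabel, if_pos hpard, hlv, hld, cOf, if_neg hpar]
    rw [fOdd, fEven]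
    -- left sum: peel the first two terms
    rw [show N + 1 - 1 = N from rfl]
    rw [sum_Icc_bot (by omega : 1 ≤ N), sum_Icc_bot (by omega : 1 + 1 ≤ N)]
    have hsum : ∑ i ∈ Finset.Icc 2 (N-1), seqOf (dn hq v) i * hlvl (q-1) (shf k) (i+1)
        = ∑ i ∈ Finset.Icc (1+1+1) N, seqOf v i * hlvl q k (i+1) := by
      rw [sum_seq_dn hq v 2 (N-1) (by omega)]
      refine Finset.sum_congr ?_ (fun x _ => rfl)
      ext x
      simp only [Finset.mem_Icc]
      omega
    rw [hsum]
    set U := ∑ i ∈ Finset.Icc (1+1+1) N, seqOf v i * hlvl q k (i+1) with hU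
    have hx2 : seqOf v 2 + 1 ≤ k 2 := seqOf_lt_k hk v 2 (by omega)
    have hseq2 : seqOf (dn hq v) 1 = seqOf v 2 := seqOf_dn hq v 1 le_rfl
    have hsk1 : shf k 1 = k 2 := rfl
    have hh23 : hlvl (q-1) (shf k) 2 = hlvl q k (2+1) := hlvl_shift q k hq 2
    rw [hseq2, hsk1, hh23]
    have hNT : U + (N-2)/2 + 1 ≤ hlvl q k (2+1) := by
      have := tail_bound (q-1) (shf k) (seqOf (dn hq v)) N hN2 (by omega)
        (fun i h1 h2 => seqOf_lt_k hk' (dn hq v) i (by omega))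
      rw [sum_seq_dn hq v 2 (N-1) (by omega)] at this
      rw [← hh23]
      have e : Finset.Icc (2+1) (N-1+1) = Finset.Icc (1+1+1) N := by
        ext x; simp only [Finset.mem_Icc]; omega
      rw [e] at this
      omega
    have hh2 : hlvl q k 2 = 1 + k 2 * hlvl q k (2+1) := hlvl_succ q k 2 (by omega)
    have hBX : (k 2 - seqOf v 2) * hlvl q k (2+1) + seqOf v 2 * hlvl q k (2+1)
        = k 2 * hlvl q k (2+1) := by
      rw [← Nat.add_mul]
      congr 1
      omega
    have hge : hlvl q k (2+1) ≤ (k 2 - seqOf v 2) * hlvl q k (2+1) :=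
      Nat.le_mul_of_pos_left _ (by omega)
    have hmul1 : (1 + seqOf v 1) * hlvl q k 2 = hlvl q k 2 + seqOf v 1 * hlvl q k 2 := by
      rw [Nat.add_mul, Nat.one_mul]
    rw [hmul1]
    have l1 : seqOf v (1+1) * hlvl q k (1+1+1) = seqOf v 2 * hlvl q k (2+1) := rfl
    have l2 : hlvl q k (1+1) = hlvl q k 2 := rfl
    have l3 : seqOf v 1 * hlvl q k (1+1) = seqOf v 1 * hlvl q k 2 := rfl
    omega

lemma cOf_le {q : ℕ} {k : ℕ → ℕ} (hk : ∀ i, 1 ≤ k i) (v : Vertex q k) :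
    cOf v ≤ k 1 - 1 := by
  have hs1 := seqOf_lt_k hk v 1 le_rfl
  unfold cOf
  split <;> omega

/-- Signed difference formula for a deep vertex (`v.1.val ≥ 2`). -/
lemma keyB (q : ℕ) (k : ℕ → ℕ) (hq : 2 ≤ q) (hk : ∀ i, 1 ≤ k i)
    (v : Vertex q k) (hv : 2 ≤ v.1.val) :
    (flabel q k v : ℤ) - flabel q k (parent v)
      = (if Even (level v) then 1 else -1) * ((k 1 : ℤ) - 1 - 2 * seqOf v 1)
          * hlvl q k 2
        - ((flabel (q-1) (shf k) (dn hq v) : ℤ)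
            - flabel (q-1) (shf k) (parent (dn hq v))) := by
  have hpv : (parent v).1.val = v.1.val - 1 := rfl
  have hkv := key q k hq hk v (by omega)
  have hkp := key q k hq hk (parent v) (by omega)
  rw [dn_parent hq v hv] at hkp
  have hs1 : seqOf v 1 + 1 ≤ k 1 := seqOf_lt_k hk v 1 le_rfl
  have hseqp : seqOf (parent v) 1 = seqOf v 1 := seqOf_parent_lt v 1 (by omega)
  have hlv : level v = v.1.val + 1 := rfl
  have hlp : level (parent v) = v.1.val - 1 + 1 := rfl
  have z1 : (flabel q k v : ℤ) + (flabel (q-1) (shf k) (dn hq v) : ℤ)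
      = (1 + (cOf v : ℤ)) * (hlvl q k 2 : ℤ) := by exact_mod_cast hkv
  have z2 : (flabel q k (parent v) : ℤ)
        + (flabel (q-1) (shf k) (parent (dn hq v)) : ℤ)
      = (1 + (cOf (parent v) : ℤ)) * (hlvl q k 2 : ℤ) := by exact_mod_cast hkp
  by_cases hp : Even (level v)
  · have hp' : ¬ Even (level (parent v)) := by
      rw [hlv] at hp; rw [hlp]
      rw [Nat.even_iff] at hp ⊢
      omega
    have hcv : ((cOf v : ℕ) : ℤ) = (k 1 : ℤ) - 1 - seqOf v 1 := by
      rw [cOf, if_pos hp]; omega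
    have hcp : ((cOf (parent v) : ℕ) : ℤ) = (seqOf v 1 : ℤ) := by
      rw [cOf, if_neg hp', hseqp]
    rw [hcv] at z1; rw [hcp] at z2
    rw [if_pos hp]
    linear_combination z1 - z2
  · have hp' : Even (level (parent v)) := by
      rw [hlv] at hp; rw [hlp]
      rw [Nat.even_iff] at hp ⊢
      omega
    have hcv : ((cOf v : ℕ) : ℤ) = (seqOf v 1 : ℤ) := by
      rw [cOf, if_neg hp]
    have hcp : ((cOf (parent v) : ℕ) : ℤ) = (k 1 : ℤ) - 1 - seqOf v 1 := by
      rw [cOf, if_pos hp', hseqp]; omega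
    rw [hcv] at z1; rw [hcp] at z2
    rw [if_neg hp]
    linear_combination z1 - z2

/-- abs bounds for `a*h - D`. -/
lemma absKey_low {h a D : ℤ} (hh : 1 ≤ h) (hD1 : 1 ≤ |D|) (hD2 : |D| ≤ h - 1) :
    1 ≤ |a * h - D| := by
  rcases eq_or_ne a 0 with rfl | ha
  · simpa using hD1
  · have h1 : 1 ≤ |a| := Int.one_le_abs (by omega)
    have h2 : h ≤ |a * h| := by
      rw [abs_mul, abs_of_nonneg (by omega : (0:ℤ) ≤ h)]
      nlinarith
    have h3 := abs_sub_abs_le_abs_sub (a*h) D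
    omega

lemma absKey_high {h a D K : ℤ} (hh : 1 ≤ h) (hD2 : |D| ≤ h - 1) (hK : |a| ≤ K) :
    |a * h - D| ≤ (K + 1) * h - 1 := by
  have h1 : |a * h - D| ≤ |a * h| + |D| := abs_sub _ _
  have h2 : |a * h| ≤ K * h := by
    rw [abs_mul, abs_of_nonneg (by omega : (0:ℤ) ≤ h)]
    exact mul_le_mul_of_nonneg_right hK (by omega)
  have h3 : (K + 1) * h = K * h + h := by ring
  omega

lemma cancelKey {h a1 a2 D1 D2 : ℤ} (hh : 1 ≤ h) (hb1 : |D1| ≤ h - 1)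
    (hb2 : |D2| ≤ h - 1) (hpar : (a1 - a2) % 2 = 0)
    (heq : a1 * h - D1 = a2 * h - D2) : a1 = a2 ∧ D1 = D2 := by
  have hd : (a1 - a2) * h = D1 - D2 := by linear_combination heq
  rcases eq_or_ne a1 a2 with hae | hane
  · subst hae
    simp only [sub_self, zero_mul] at hd
    exact ⟨rfl, by omega⟩
  · exfalso
    have h2 : 2 ≤ |a1 - a2| := by
      have : a1 - a2 ≠ 0 := by omega
      have h1 := Int.one_le_abs this
      rcases abs_cases (a1 - a2) with ⟨he, _⟩ | ⟨he, _⟩ <;> omega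
    have h3 : 2 * h ≤ |(a1 - a2) * h| := by
      rw [abs_mul, abs_of_nonneg (by omega : (0:ℤ) ≤ h)]
      nlinarith
    rw [hd] at h3
    have h4 : |D1 - D2| ≤ |D1| + |D2| := abs_sub _ _
    omega

/-- Euclidean uniqueness. -/
lemma euclid {h a b r1 r2 : ℕ} (hpos : 0 < h) (h1 : r1 < h) (h2 : r2 < h)
    (he : a * h + r1 = b * h + r2) : a = b ∧ r1 = r2 := by
  have d1 : (a * h + r1) / h = a := by
    rw [Nat.mul_comm, Nat.mul_add_div hpos, Nat.div_eq_of_lt h1, Nat.add_zero]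
  have d2 : (b * h + r2) / h = b := by
    rw [Nat.mul_comm, Nat.mul_add_div hpos, Nat.div_eq_of_lt h2, Nat.add_zero]
  have hab : a = b := by rw [← d1, ← d2, he]
  subst hab
  omega

/- ---------- the main induction ---------- -/

def Good (q : ℕ) (k : ℕ → ℕ) : Prop :=
  (∀ v : Vertex q k, flabel q k v ≤ hlvl q k 1 - 1) ∧
  Function.Injective (flabel q k) ∧
  (∀ n, n ≤ hlvl q k 1 - 1 → ∃ v, flabel q k v = n) ∧
  (∀ v : Vertex q k, 0 < v.1.val →
      1 ≤ glabel q k v ∧ glabel q k v ≤ hlvl q k 1 - 1) ∧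
  (∀ v w : Vertex q k, 0 < v.1.val → 0 < w.1.val →
      glabel q k v = glabel q k w → v = w) ∧
  (∀ m, 1 ≤ m → m ≤ hlvl q k 1 - 1 → ∃ v : Vertex q k, 0 < v.1.val ∧ glabel q k v = m)

theorem good : ∀ q k, 1 ≤ q → (∀ i, 1 ≤ k i) → Good q k := by
  intro q
  induction q using Nat.strong_induction_on with
  | _ q IH =>
  intro k hq hk
  rcases Nat.lt_or_ge q 2 with hqlt | hq2
  · -- base case q = 1
    have hq1' : q = 1 := by omega
    subst hq1'
    have hM : hlvl 1 k 1 = 1 := by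
      unfold hlvl
      rw [show (1:ℕ) - 1 = 0 from rfl, Finset.Icc_eq_empty (by omega)]
      simp
    have hall : ∀ v : Vertex 1 k, v.1.val = 0 := fun v => by have := v.1.isLt; omega
    have hflab : ∀ v : Vertex 1 k, flabel 1 k v = 0 :=
      fun v => flabel_of_fst_zero v (hall v)
    have heq : ∀ v w : Vertex 1 k, v = w := by
      intro v w
      apply vertex_ext (by rw [hall v, hall w])
      intro i
      rw [seqOf_of_ge _ _ (by rw [hall v]; omega),
          seqOf_of_ge _ _ (by rw [hall w]; omega)]
    refine ⟨?_, ?_, ?_, ?_, ?_, ?_⟩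
    · intro v; rw [hflab v]; omega
    · intro v w _; exact heq v w
    · intro n hn
      rw [hM] at hn
      exact ⟨⟨⟨0, by omega⟩, fun i => i.elim0⟩, (hflab _).trans (by omega)⟩
    · intro v hv; rw [hall v] at hv; omega
    · intro v w hv _ _; rw [hall v] at hv; omega
    · intro m hm1 hm2; rw [hM] at hm2; omega
  · -- inductive step q ≥ 2
    obtain ⟨ihb, ihinj, ihsurj, ihgb, ihginj, ihgsurj⟩ :=
      IH (q-1) (by omega) (shf k) (by omega) (fun i => hk (i+1))
    have hk' : ∀ i, 1 ≤ shf k i := fun i => hk (i+1)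
    have hsh : hlvl (q-1) (shf k) 1 = hlvl q k 2 := hlvl_shift q k hq2 1
    rw [hsh] at ihb ihsurj ihgb ihgsurj
    have hM : hlvl q k 1 = 1 + k 1 * hlvl q k 2 := hlvl_succ q k 1 (by omega)
    have hpos2 : 1 ≤ hlvl q k 2 := hlvl_one_le q k 2
    have hkey := key q k hq2 hk
    have hc_le : ∀ v : Vertex q k, cOf v ≤ k 1 - 1 := cOf_le hk
    have hfpos : ∀ v : Vertex q k, 0 < v.1.val → 1 ≤ flabel q k v := by
      intro v hv
      have h1 := hkey v hv
      have h2 := ihb (dn hq2 v)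
      have h3 : hlvl q k 2 ≤ (1 + cOf v) * hlvl q k 2 :=
        Nat.le_mul_of_pos_left _ (by omega)
      omega
    have hfbound : ∀ v : Vertex q k, flabel q k v ≤ hlvl q k 1 - 1 := by
      intro v
      rcases Nat.eq_zero_or_pos v.1.val with h0 | h0
      · rw [flabel_of_fst_zero v h0]; omega
      · have h1 := hkey v h0
        have h2 : (1 + cOf v) * hlvl q k 2 ≤ k 1 * hlvl q k 2 :=
          Nat.mul_le_mul_right _ (by have := hc_le v; have := hk 1; omega)
        omega
    have hdnfst : ∀ v : Vertex q k, (dn hq2 v).1.val = v.1.val - 1 := fun v => rfl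
    have hinj : Function.Injective (flabel q k) := by
      intro v w hvw
      rcases Nat.eq_zero_or_pos v.1.val with hv0 | hv0 <;>
        rcases Nat.eq_zero_or_pos w.1.val with hw0 | hw0
      · apply vertex_ext (by omega)
        intro i
        rw [seqOf_of_ge _ _ (by omega), seqOf_of_ge _ _ (by omega)]
      · exfalso
        rw [flabel_of_fst_zero v hv0] at hvw
        have := hfpos w hw0
        omega
      · exfalso
        rw [flabel_of_fst_zero w hw0] at hvw
        have := hfpos v hv0
        omega
      · have k1v := hkey v hv0
        have k1w := hkey w hw0
        have b1 := ihb (dn hq2 v)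
        have b2 := ihb (dn hq2 w)
        have pv : (1 + cOf v) * hlvl q k 2 = hlvl q k 2 + cOf v * hlvl q k 2 := by
          rw [Nat.add_mul, Nat.one_mul]
        have pw : (1 + cOf w) * hlvl q k 2 = hlvl q k 2 + cOf w * hlvl q k 2 := by
          rw [Nat.add_mul, Nat.one_mul]
        have he : cOf v * hlvl q k 2 + (hlvl q k 2 - flabel (q-1) (shf k) (dn hq2 v) - 1)
            = cOf w * hlvl q k 2 + (hlvl q k 2 - flabel (q-1) (shf k) (dn hq2 w) - 1) := by
          omega
        obtain ⟨hc, hr⟩ := euclid (by omega) (by omega) (by omega) he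
        have hfd : flabel (q-1) (shf k) (dn hq2 v) = flabel (q-1) (shf k) (dn hq2 w) := by
          omega
        have hdn : dn hq2 v = dn hq2 w := ihinj hfd
        have hfst : v.1.val = w.1.val := by
          have h1 : (dn hq2 v).1.val = (dn hq2 w).1.val := by rw [hdn]
          rw [hdnfst, hdnfst] at h1
          omega
        have hs1v := seqOf_lt_k hk v 1 le_rfl
        have hs1w := seqOf_lt_k hk w 1 le_rfl
        have hs1 : seqOf v 1 = seqOf w 1 := by
          have hlev : level v = level w := by
            show v.1.val + 1 = w.1.val + 1; omega
          unfold cOf at hc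
          rw [hlev] at hc
          split at hc <;> omega
        apply vertex_ext hfst
        intro i
        rcases Nat.eq_zero_or_pos i with rfl | hi
        · exact hs1
        · have h1 : seqOf (dn hq2 v) i = seqOf (dn hq2 w) i := by rw [hdn]
          rw [seqOf_dn hq2 v i (by omega), seqOf_dn hq2 w i (by omega)] at h1
          exact h1
    have hsurj : ∀ n, n ≤ hlvl q k 1 - 1 → ∃ v, flabel q k v = n := by
      intro n hn
      rcases Nat.eq_zero_or_pos n with rfl | hn1
      · exact ⟨⟨⟨0, by omega⟩, fun i => i.elim0⟩, flabel_of_fst_zero _ rfl⟩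
      · obtain ⟨c, t, hct, htlt, hclt⟩ :
            ∃ c t, c * hlvl q k 2 + t = n - 1 ∧ t < hlvl q k 2 ∧ c < k 1 := by
          refine ⟨(n-1) / hlvl q k 2, (n-1) % hlvl q k 2, ?_,
            Nat.mod_lt _ (by omega), ?_⟩
          · rw [Nat.mul_comm]; exact Nat.div_add_mod _ _
          · rw [Nat.div_lt_iff_lt_mul (by omega)]; omega
        obtain ⟨v', hv'⟩ := ihsurj (hlvl q k 2 - 1 - t) (by omega)
        set j : ℕ := if Even (v'.1.val + 1 + 1) then k 1 - 1 - c else c with hjdef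
        have hjk : j < k 1 := by rw [hjdef]; split <;> omega
        refine ⟨upv hq2 j hjk v', ?_⟩
        have hup1 : 0 < (upv hq2 j hjk v').1.val := by rw [upv_fst]; omega
        have hkk := hkey (upv hq2 j hjk v') hup1
        rw [dn_upv hq2 j hjk v', hv'] at hkk
        have hlvu : level (upv hq2 j hjk v') = v'.1.val + 1 + 1 := rfl
        have hcof : cOf (upv hq2 j hjk v') = c := by
          by_cases hp : Even (v'.1.val + 1 + 1)
          · rw [cOf, hlvu, if_pos hp, seqOf_upv_one, hjdef, if_pos hp]
            omega
          · rw [cOf, hlvu, if_neg hp, seqOf_upv_one, hjdef, if_neg hp]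
        rw [hcof] at hkk
        have hprod : (1+c) * hlvl q k 2 = hlvl q k 2 + c * hlvl q k 2 := by
          rw [Nat.add_mul, Nat.one_mul]
        omega
    -- ------- edge label machinery -------
    have hgA : ∀ v : Vertex q k, v.1.val = 1 →
        glabel q k v = (k 1 - seqOf v 1) * hlvl q k 2 := by
      intro v hv1
      have hp0 : (parent v).1.val = 0 := by
        have h : (parent v).1.val = v.1.val - 1 := rfl
        omega
      have hd0 : (dn hq2 v).1.val = 0 := by rw [hdnfst]; omega
      have h1 := hkey v (by omega)
      rw [flabel_of_fst_zero _ hd0] at h1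
      have hlv : level v = 2 := by
        have h : level v = v.1.val + 1 := rfl
        omega
      have hcv : cOf v = k 1 - 1 - seqOf v 1 := by
        rw [cOf, hlv, if_pos (by decide : Even 2)]
      have hs1 := seqOf_lt_k hk v 1 le_rfl
      have hflabv : flabel q k v = (k 1 - seqOf v 1) * hlvl q k 2 := by
        rw [show (k 1 - seqOf v 1) = 1 + cOf v by rw [hcv]; omega]
        omega
      unfold glabel
      rw [flabel_of_fst_zero _ hp0, hflabv]
      omega
    have hgB : ∀ v : Vertex q k, 2 ≤ v.1.val →
        glabel q k v = (((if Even (level v) then 1 else -1)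
            * ((k 1:ℤ) - 1 - 2 * seqOf v 1)) * hlvl q k 2
          - ((flabel (q-1) (shf k) (dn hq2 v) : ℤ)
              - flabel (q-1) (shf k) (parent (dn hq2 v)))).natAbs := by
      intro v hv2
      unfold glabel
      rw [keyB q k hq2 hk v hv2]
    have haB : ∀ v : Vertex q k, ((if Even (level v) then (1:ℤ) else -1)
        * ((k 1:ℤ) - 1 - 2 * seqOf v 1)).natAbs ≤ k 1 - 1 := by
      intro v
      have hs1 := seqOf_lt_k hk v 1 le_rfl
      split <;> omega
    have hgD : ∀ v : Vertex q k, 2 ≤ v.1.val →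
        1 ≤ ((flabel (q-1) (shf k) (dn hq2 v) : ℤ)
            - flabel (q-1) (shf k) (parent (dn hq2 v))).natAbs ∧
        ((flabel (q-1) (shf k) (dn hq2 v) : ℤ)
            - flabel (q-1) (shf k) (parent (dn hq2 v))).natAbs ≤ hlvl q k 2 - 1 := by
      intro v hv2
      have h1 := ihgb (dn hq2 v) (by rw [hdnfst]; omega)
      exact h1
    -- part 4 : bounds on glabel
    have hg4 : ∀ v : Vertex q k, 0 < v.1.val →
        1 ≤ glabel q k v ∧ glabel q k v ≤ hlvl q k 1 - 1 := by
      intro v hv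
      rcases Nat.lt_or_ge v.1.val 2 with hv1 | hv2
      · have hv1' : v.1.val = 1 := by omega
        rw [hgA v hv1']
        have hs1 := seqOf_lt_k hk v 1 le_rfl
        constructor
        · calc 1 = 1 * 1 := by omega
            _ ≤ (k 1 - seqOf v 1) * hlvl q k 2 :=
              Nat.mul_le_mul (by omega) (by omega)
        · have := Nat.mul_le_mul_right (hlvl q k 2) (show k 1 - seqOf v 1 ≤ k 1 by omega)
          omega
      · rw [hgB v hv2]
        obtain ⟨hD1, hD2⟩ := hgD v hv2
        have habs := haB v
        set a : ℤ := (if Even (level v) then (1:ℤ) else -1)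
          * ((k 1:ℤ) - 1 - 2 * seqOf v 1) with hadef
        set D : ℤ := (flabel (q-1) (shf k) (dn hq2 v) : ℤ)
            - flabel (q-1) (shf k) (parent (dn hq2 v)) with hDdef
        have hk1 := hk 1
        have hDabs : |D| = (D.natAbs : ℤ) := Int.abs_eq_natAbs D
        have haabs : |a| = (a.natAbs : ℤ) := Int.abs_eq_natAbs a
        have hXabs : |a * (hlvl q k 2 : ℤ) - D| = (((a * (hlvl q k 2 : ℤ) - D).natAbs : ℕ) : ℤ) :=
          Int.abs_eq_natAbs _
        have hla := absKey_low (a := a) (D := D) (h := (hlvl q k 2 : ℤ))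
          (by omega) (by omega) (by omega)
        have hha := absKey_high (a := a) (D := D) (h := (hlvl q k 2 : ℤ))
          (K := ((k 1 : ℤ) - 1)) (by omega) (by omega) (by omega)
        have hprod : ((k 1:ℤ) - 1 + 1) * (hlvl q k 2 : ℤ)
            = (k 1 : ℤ) * hlvl q k 2 := by ring
        have hcast : ((k 1 * hlvl q k 2 : ℕ) : ℤ) = (k 1 : ℤ) * hlvl q k 2 := by
          push_cast; ring
        constructor
        · omega
        · omega
    -- 1-vs-deep impossibility
    have hne12 : ∀ v w : Vertex q k, v.1.val = 1 → 2 ≤ w.1.val →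
        glabel q k v ≠ glabel q k w := by
      intro v w hv1 hw2 hgl
      rw [hgA v hv1, hgB w hw2] at hgl
      obtain ⟨hD1, hD2⟩ := hgD w hw2
      have hs1 := seqOf_lt_k hk v 1 le_rfl
      have hk1 := hk 1
      have hdvdX : (hlvl q k 2 : ℤ) ∣ ((if Even (level w) then (1:ℤ) else -1)
            * ((k 1:ℤ) - 1 - 2 * seqOf w 1)) * (hlvl q k 2 : ℤ)
          - ((flabel (q-1) (shf k) (dn hq2 w) : ℤ)
              - flabel (q-1) (shf k) (parent (dn hq2 w))) := by
        have hd2 : (hlvl q k 2 : ℤ) ∣ (((k 1 - seqOf v 1) * hlvl q k 2 : ℕ) : ℤ) := by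
          exact Int.natCast_dvd_natCast.mpr ⟨k 1 - seqOf v 1, Nat.mul_comm _ _⟩
        rcases Int.natAbs_eq ((if Even (level w) then (1:ℤ) else -1)
            * ((k 1:ℤ) - 1 - 2 * seqOf w 1) * (hlvl q k 2 : ℤ)
          - ((flabel (q-1) (shf k) (dn hq2 w) : ℤ)
              - flabel (q-1) (shf k) (parent (dn hq2 w)))) with h | h
        · rw [h, ← hgl]; exact hd2
        · rw [h, ← hgl]; exact (dvd_neg).mpr hd2
      have hdvdD : (hlvl q k 2 : ℤ) ∣ ((flabel (q-1) (shf k) (dn hq2 w) : ℤ)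
          - flabel (q-1) (shf k) (parent (dn hq2 w))) := by
        have h1 : (hlvl q k 2 : ℤ) ∣ ((if Even (level w) then (1:ℤ) else -1)
            * ((k 1:ℤ) - 1 - 2 * seqOf w 1)) * (hlvl q k 2 : ℤ) := dvd_mul_left _ _
        have h2 := dvd_sub h1 hdvdX
        simpa using h2
      have hD0 := Int.eq_zero_of_abs_lt_dvd hdvdD
        (by rw [Int.abs_eq_natAbs]; omega)
      rw [hD0] at hD1
      simp at hD1
    -- g-injectivity
    have hg5 : ∀ v w : Vertex q k, 0 < v.1.val → 0 < w.1.val →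
        glabel q k v = glabel q k w → v = w := by
      intro v w hv hw hgl
      rcases Nat.lt_or_ge v.1.val 2 with hv1 | hv2 <;>
        rcases Nat.lt_or_ge w.1.val 2 with hw1 | hw2
      · have hv1' : v.1.val = 1 := by omega
        have hw1' : w.1.val = 1 := by omega
        rw [hgA v hv1', hgA w hw1'] at hgl
        have hs1v := seqOf_lt_k hk v 1 le_rfl
        have hs1w := seqOf_lt_k hk w 1 le_rfl
        have hsub : k 1 - seqOf v 1 = k 1 - seqOf w 1 :=
          Nat.eq_of_mul_eq_mul_right (by omega) hgl
        apply vertex_ext (by omega)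
        intro i
        rcases Nat.eq_zero_or_pos i with rfl | hi
        · show seqOf v 1 = seqOf w 1
          omega
        · rw [seqOf_of_ge _ _ (by omega), seqOf_of_ge _ _ (by omega)]
      · exact absurd hgl (hne12 v w (by omega) hw2)
      · exact absurd hgl.symm (hne12 w v (by omega) hv2)
      · -- both deep
        rw [hgB v hv2, hgB w hw2] at hgl
        obtain ⟨hDv1, hDv2⟩ := hgD v hv2
        obtain ⟨hDw1, hDw2⟩ := hgD w hw2
        have habv := haB v
        have habw := haB w
        have hk1 := hk 1
        have hs1v := seqOf_lt_k hk v 1 le_rfl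
        have hs1w := seqOf_lt_k hk w 1 le_rfl
        have hdnv1 : 0 < (dn hq2 v).1.val := by rw [hdnfst]; omega
        have hdnw1 : 0 < (dn hq2 w).1.val := by rw [hdnfst]; omega
        have hparVW : (((if Even (level v) then (1:ℤ) else -1)
              * ((k 1:ℤ) - 1 - 2 * seqOf v 1))
            - ((if Even (level w) then (1:ℤ) else -1)
              * ((k 1:ℤ) - 1 - 2 * seqOf w 1))) % 2 = 0 := by
          split <;> split <;> omega
        have hparVW' : (((if Even (level v) then (1:ℤ) else -1)
              * ((k 1:ℤ) - 1 - 2 * seqOf v 1))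
            - (-((if Even (level w) then (1:ℤ) else -1)
              * ((k 1:ℤ) - 1 - 2 * seqOf w 1)))) % 2 = 0 := by
          split <;> split <;> omega
        -- the common post-processing once we know Dv = Dw:
        have hfinish : ((if Even (level v) then (1:ℤ) else -1)
              * ((k 1:ℤ) - 1 - 2 * seqOf v 1))
            = ((if Even (level w) then (1:ℤ) else -1)
              * ((k 1:ℤ) - 1 - 2 * seqOf w 1)) →
            dn hq2 v = dn hq2 w → v = w := by
          intro ha hdn
          have hfst : v.1.val = w.1.val := by
            have h1 : (dn hq2 v).1.val = (dn hq2 w).1.val := by rw [hdn]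
            rw [hdnfst, hdnfst] at h1
            omega
          have hlev : level v = level w := by
            show v.1.val + 1 = w.1.val + 1
            omega
          rw [hlev] at ha
          have hseq1 : seqOf v 1 = seqOf w 1 := by
            split at ha <;> omega
          apply vertex_ext hfst
          intro i
          rcases Nat.eq_zero_or_pos i with rfl | hi
          · show seqOf v 1 = seqOf w 1
            omega
          · have h1 : seqOf (dn hq2 v) i = seqOf (dn hq2 w) i := by rw [hdn]
            rw [seqOf_dn hq2 v i (by omega), seqOf_dn hq2 w i (by omega)] at h1
            exact h1
        rcases Int.natAbs_eq_natAbs_iff.mp hgl with hcase | hcase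
        · obtain ⟨haa, hDD⟩ := cancelKey (h := (hlvl q k 2 : ℤ))
            (by omega)
            (by rw [Int.abs_eq_natAbs]; omega)
            (by rw [Int.abs_eq_natAbs]; omega)
            hparVW hcase
          have hgldn : glabel (q-1) (shf k) (dn hq2 v)
              = glabel (q-1) (shf k) (dn hq2 w) := by
            unfold glabel
            rw [hDD]
          have hdn := ihginj (dn hq2 v) (dn hq2 w) hdnv1 hdnw1 hgldn
          exact hfinish haa hdn
        · exfalso
          have hcase' : ((if Even (level v) then (1:ℤ) else -1)
                * ((k 1:ℤ) - 1 - 2 * seqOf v 1)) * (hlvl q k 2 : ℤ)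
              - ((flabel (q-1) (shf k) (dn hq2 v) : ℤ)
                  - flabel (q-1) (shf k) (parent (dn hq2 v)))
              = (-((if Even (level w) then (1:ℤ) else -1)
                * ((k 1:ℤ) - 1 - 2 * seqOf w 1))) * (hlvl q k 2 : ℤ)
              - (-((flabel (q-1) (shf k) (dn hq2 w) : ℤ)
                  - flabel (q-1) (shf k) (parent (dn hq2 w)))) := by
            linear_combination hcase
          obtain ⟨haa, hDD⟩ := cancelKey (h := (hlvl q k 2 : ℤ))
            (by omega)
            (by rw [Int.abs_eq_natAbs]; omega)
            (by rw [Int.abs_eq_natAbs, Int.natAbs_neg]; omega)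
            hparVW' hcase'
          have hgldn : glabel (q-1) (shf k) (dn hq2 v)
              = glabel (q-1) (shf k) (dn hq2 w) := by
            unfold glabel
            omega
          have hdn := ihginj (dn hq2 v) (dn hq2 w) hdnv1 hdnw1 hgldn
          have hDeq : (flabel (q-1) (shf k) (dn hq2 v) : ℤ)
              - flabel (q-1) (shf k) (parent (dn hq2 v))
              = (flabel (q-1) (shf k) (dn hq2 w) : ℤ)
                  - flabel (q-1) (shf k) (parent (dn hq2 w)) := by
            rw [hdn]
          omega
    -- builder for surjectivity
    have hbuild : ∀ w' : Vertex (q-1) (shf k), 0 < w'.1.val → ∀ a : ℤ,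
        a.natAbs ≤ k 1 - 1 → (a - ((k 1:ℤ) - 1)) % 2 = 0 →
        ∃ v : Vertex q k, 0 < v.1.val ∧
          glabel q k v = (a * (hlvl q k 2 : ℤ)
            - ((flabel (q-1) (shf k) w' : ℤ)
                - flabel (q-1) (shf k) (parent w'))).natAbs := by
      intro w' hw' a hab hpar
      have hk1 := hk 1
      by_cases hp : Even (w'.1.val + 1 + 1)
      · obtain ⟨j, hjk, hjval⟩ : ∃ j : ℕ, j < k 1 ∧ (k 1:ℤ) - 1 - 2*(j:ℤ) = a :=
          ⟨(((k 1:ℤ) - 1 - a).toNat)/2, by omega, by omega⟩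
        refine ⟨upv hq2 j hjk w', by rw [upv_fst]; omega, ?_⟩
        have hv2 : 2 ≤ (upv hq2 j hjk w').1.val := by rw [upv_fst]; omega
        rw [hgB _ hv2, dn_upv hq2 j hjk w', seqOf_upv_one hq2 j hjk w']
        have hlvu : level (upv hq2 j hjk w') = w'.1.val + 1 + 1 := rfl
        rw [hlvu, if_pos hp, hjval, one_mul]
      · obtain ⟨j, hjk, hjval⟩ : ∃ j : ℕ, j < k 1 ∧ (k 1:ℤ) - 1 - 2*(j:ℤ) = -a :=
          ⟨(((k 1:ℤ) - 1 + a).toNat)/2, by omega, by omega⟩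
        refine ⟨upv hq2 j hjk w', by rw [upv_fst]; omega, ?_⟩
        have hv2 : 2 ≤ (upv hq2 j hjk w').1.val := by rw [upv_fst]; omega
        rw [hgB _ hv2, dn_upv hq2 j hjk w', seqOf_upv_one hq2 j hjk w']
        have hlvu : level (upv hq2 j hjk w') = w'.1.val + 1 + 1 := rfl
        rw [hlvu, if_neg hp, hjval]
        have he : (-1 : ℤ) * (-a) * (hlvl q k 2 : ℤ) = a * (hlvl q k 2 : ℤ) := by ring
        rw [he]
    -- g-surjectivity
    have hg6 : ∀ m, 1 ≤ m → m ≤ hlvl q k 1 - 1 →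
        ∃ v : Vertex q k, 0 < v.1.val ∧ glabel q k v = m := by
      intro m hm1 hm2
      have hk1 := hk 1
      rw [hM] at hm2
      by_cases hdvd : m % hlvl q k 2 = 0
      · obtain ⟨c, hc⟩ := Nat.dvd_of_mod_eq_zero hdvd
        have hc1 : 1 ≤ c := by
          rcases Nat.eq_zero_or_pos c with rfl | h
          · rw [Nat.mul_zero] at hc; omega
          · exact h
        have hck : c ≤ k 1 := by
          by_contra hcon
          have h1 : hlvl q k 2 * (k 1 + 1) ≤ hlvl q k 2 * c :=
            Nat.mul_le_mul_left _ (by omega)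
          have h2 : hlvl q k 2 * (k 1 + 1) = hlvl q k 2 * k 1 + hlvl q k 2 := by ring
          have h3 : hlvl q k 2 * k 1 = k 1 * hlvl q k 2 := Nat.mul_comm _ _
          omega
        have hjk : k 1 - c < k 1 := by omega
        refine ⟨upv hq2 (k 1 - c) hjk ⟨⟨0, by omega⟩, fun i => i.elim0⟩, ?_, ?_⟩
        · erw [upv_fst]
          omega
        · have hfst1 : (upv hq2 (k 1 - c) hjk ⟨⟨0, by omega⟩, fun i => i.elim0⟩).1.val
              = 1 := rfl
          erw [hgA _ hfst1, seqOf_upv_one]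
          have h3 : c * hlvl q k 2 = hlvl q k 2 * c := Nat.mul_comm _ _
          rw [show k 1 - (k 1 - c) = c by omega]
          omega
      · obtain ⟨t, u, htu, hu1, hu2, htk⟩ : ∃ t u,
            t * hlvl q k 2 + u = m ∧ 1 ≤ u ∧ u ≤ hlvl q k 2 - 1 ∧ t ≤ k 1 - 1 := by
          refine ⟨m / hlvl q k 2, m % hlvl q k 2, ?_, by omega,
            by have := Nat.mod_lt m (show 0 < hlvl q k 2 by omega); omega, ?_⟩
          · rw [Nat.mul_comm]
            exact Nat.div_add_mod _ _
          · have hne : m ≠ k 1 * hlvl q k 2 := by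
              intro h
              apply hdvd
              rw [h]
              exact Nat.mul_mod_left _ _
            have hlt : m < k 1 * hlvl q k 2 := by omega
            have := (Nat.div_lt_iff_lt_mul (show 0 < hlvl q k 2 by omega)).mpr hlt
            omega
        obtain ⟨e, he1, he2, hepar⟩ : ∃ e : ℕ, (e = t ∨ e = t + 1) ∧ e ≤ k 1 - 1 ∧
            ((e:ℤ) - ((k 1:ℤ) - 1)) % 2 = 0 := by
          by_cases hp : (k 1 - 1 - t) % 2 = 0
          · exact ⟨t, Or.inl rfl, by omega, by omega⟩
          · exact ⟨t+1, Or.inr rfl, by omega, by omega⟩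
        have hu' : ∃ u' : ℕ, 1 ≤ u' ∧ u' ≤ hlvl q k 2 - 1 ∧
            ((e = t ∧ u' = u) ∨ (e = t + 1 ∧ u' = hlvl q k 2 - u)) := by
          rcases he1 with he | he
          · exact ⟨u, by omega, by omega, Or.inl ⟨he, rfl⟩⟩
          · exact ⟨hlvl q k 2 - u, by omega, by omega, Or.inr ⟨he, rfl⟩⟩
        obtain ⟨u', hu'1, hu'2, hu'c⟩ := hu'
        obtain ⟨w', hw'pos, hw'g⟩ := ihgsurj u' hu'1 hu'2
        have hDval : ((flabel (q-1) (shf k) w' : ℤ)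
            - flabel (q-1) (shf k) (parent w')).natAbs = u' := hw'g
        have hcast : ((t * hlvl q k 2 : ℕ) : ℤ) = (t:ℤ) * (hlvl q k 2:ℤ) := by
          push_cast; ring
        obtain ⟨a, haabs, hapar, hval⟩ : ∃ a : ℤ, a.natAbs ≤ k 1 - 1 ∧
            (a - ((k 1:ℤ)-1)) % 2 = 0 ∧
            (a * (hlvl q k 2:ℤ) - ((flabel (q-1) (shf k) w' : ℤ)
                - flabel (q-1) (shf k) (parent w')) = (m:ℤ) ∨
             a * (hlvl q k 2:ℤ) - ((flabel (q-1) (shf k) w' : ℤ)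
                - flabel (q-1) (shf k) (parent w')) = -(m:ℤ)) := by
          have hcast2 : ((t+1) * (hlvl q k 2:ℤ) = (t:ℤ) * hlvl q k 2 + hlvl q k 2) := by
            ring
          have hnegmul : (-(t:ℤ)) * (hlvl q k 2:ℤ) = -((t:ℤ) * hlvl q k 2) := by ring
          have hnegmul2 : (-((t:ℤ)+1)) * (hlvl q k 2:ℤ)
              = -(((t:ℤ)+1) * hlvl q k 2) := by ring
          rcases hu'c with ⟨he, hue⟩ | ⟨he, hue⟩
          · refine ⟨if ((flabel (q-1) (shf k) w' : ℤ)
                - flabel (q-1) (shf k) (parent w')) = (u' : ℤ)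
              then -(t:ℤ) else (t:ℤ), ?_, ?_, ?_⟩
            · split <;> omega
            · split <;> omega
            · split
              · rename_i hD
                right
                rw [hD, hnegmul]
                omega
              · rename_i hD
                left
                have hD' : ((flabel (q-1) (shf k) w' : ℤ)
                    - flabel (q-1) (shf k) (parent w')) = -(u' : ℤ) := by omega
                rw [hD']
                omega
          · refine ⟨if ((flabel (q-1) (shf k) w' : ℤ)
                - flabel (q-1) (shf k) (parent w')) = (u' : ℤ)
              then ((t:ℤ)+1) else -((t:ℤ)+1), ?_, ?_, ?_⟩
            · split <;> omega
            · split <;> omega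
            · split
              · rename_i hD
                left
                rw [hD, hcast2]
                omega
              · rename_i hD
                right
                have hD' : ((flabel (q-1) (shf k) w' : ℤ)
                    - flabel (q-1) (shf k) (parent w')) = -(u' : ℤ) := by omega
                rw [hD', hnegmul2, hcast2]
                omega
        obtain ⟨v, hvpos, hvg⟩ := hbuild w' hw'pos a haabs hapar
        refine ⟨v, hvpos, ?_⟩
        rw [hvg]
        rcases hval with h | h
        · rw [h]
          exact Int.natAbs_natCast m
        · rw [h, Int.natAbs_neg]
          exact Int.natAbs_natCast m
    exact ⟨hfbound, hinj, hsurj, hg4, hg5, hg6⟩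


end GracefulAux

/-- Theorem 1: `f` is a graceful labelling of every rooted symmetric tree: it is
injective into `{0, …, h 1 - 1}` and the induced edge labelling
`g(uv) = |f u - f v|` (on the edges joining each non-root vertex to its parent)
is an injective map onto `{1, 2, …, h 1 - 1}`. -/
theorem flabel_graceful (q : ℕ) (k : ℕ → ℕ) (hq : 1 ≤ q) (hk : ∀ i, 1 ≤ k i) :
    Function.Injective (flabel q k) ∧
    (∀ v : Vertex q k, flabel q k v ≤ hlvl q k 1 - 1) ∧
    (∀ v w : Vertex q k, 0 < v.1.val → 0 < w.1.val →
      glabel q k v = glabel q k w → v = w) ∧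
    (∀ v : Vertex q k, 0 < v.1.val →
      glabel q k v ∈ Finset.Icc 1 (hlvl q k 1 - 1)) ∧
    (∀ m ∈ Finset.Icc 1 (hlvl q k 1 - 1),
      ∃ v : Vertex q k, 0 < v.1.val ∧ glabel q k v = m) := by
  obtain ⟨hb, hinj, hsurj, hgb, hginj, hgsurj⟩ := GracefulAux.good q k hq hk
  refine ⟨hinj, hb, hginj, ?_, ?_⟩
  · intro v hv
    rw [Finset.mem_Icc]
    exact hgb v hv
  · intro m hm
    rw [Finset.mem_Icc] at hm
    exact hgsurj m hm.1 hm.2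
end

section
/- Let T be a rooted symmetric tree with daughter degree sequence (2, k_2, k_3, ...). Then the graceful labelling f of Theorem 1 is a weakly α-labelling of T with critical value k = h_2: for every edge xy, either f(x) ≤ h_2 ≤ f(y) or f(y) ≤ h_2 ≤ f(x). -/
/-!
Let `ψ_s` label the subtree rooted at level `s`: its root gets `h_s`, and the labels
`1, …, h_s - 1` are cut into `k_s` blocks of length `h_{s+1}`, the vertices of the subtree of
child `c` going into block `c` (odd depth) or `k_s - 1 - c` (even depth) as a reflected copy
`b h_{s+1} + 1 + (h_{s+1} - ψ_{s+1})` of the labelling one level down. The labelling of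
Theorem 1 is `f = h_1 - ψ_1`.

By induction on the depth, `ψ_s` is injective with values in `[1, h_s]`: block and offset
determine the vertex. Its edge differences have distinct absolute values: the edge at the root
is the only one whose difference is divisible by `h_{s+1}`, and for the others the block part
is `≡ k_s - 1 (mod 2)`, which leaves no room for two edges with equal or opposite differences.
When `k_1 = 2` there are two blocks, `[1, h_2]` and `[h_2 + 1, 2 h_2]`, and the two ends of an
edge below level 2 lie in different blocks; so `h_2` is a critical value.
-/

lemma Int.eq_and_eq_of_mul_add_eq_mul_add {n H a a' r r' : ℤ} (hH : 0 < H) (hn : n ∣ a - a')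
    (hr : |r - r'| < n * H) (h : a * H + r = a' * H + r') : a = a' ∧ r = r' := by
  have h₁ : (a - a') * H = r' - r := by linear_combination h
  have h₂ : r' - r = 0 :=
    Int.eq_zero_of_abs_lt_dvd (h₁ ▸ mul_dvd_mul_right hn H) (by rwa [abs_sub_comm])
  have h₃ : a - a' = 0 := (mul_eq_zero.mp (h₁.trans h₂)).resolve_right hH.ne'
  constructor <;> omega

lemma Int.eq_or_eq_neg_of_abs_mul_sub_eq {H a a' e e' : ℤ} (hH : 0 < H) (hsub : 2 ∣ a - a')
    (hadd : 2 ∣ a + a') (he : |e| < H) (he' : |e'| < H) (h : |a * H - e| = |a' * H - e'|) :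
    (a = a' ∧ e = e') ∨ (a = -a' ∧ e = -e') := by
  rw [abs_lt] at he he'
  rcases abs_eq_abs.mp h with h | h
  · obtain ⟨ha, he⟩ := Int.eq_and_eq_of_mul_add_eq_mul_add hH hsub
      (by rw [abs_lt]; constructor <;> linarith) (by linear_combination h :
        a * H + -e = a' * H + -e')
    exact .inl ⟨ha, by linarith⟩
  · obtain ⟨ha, he⟩ := Int.eq_and_eq_of_mul_add_eq_mul_add hH (by simpa using hadd)
      (by rw [abs_lt]; constructor <;> linarith) (by linear_combination h :
        a * H + -e = -a' * H + e')
    exact .inr ⟨ha, by linarith⟩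

namespace SymmetricTree

open Finset

variable {q : ℕ} {k : ℕ → ℕ}

lemma one_le_hlvl (s : ℕ) : 1 ≤ hlvl q k s := Nat.le_add_right 1 _

lemma hlvl_eq_one_add_mul {s : ℕ} (hs : s + 1 ≤ q) :
    hlvl q k s = 1 + k s * hlvl q k (s + 1) := by
  have hprod : ∀ j ∈ Icc (s + 1) (q - 1),
      ∏ t ∈ Icc s j, k t = k s * ∏ t ∈ Icc (s + 1) j, k t := fun j hj => by
    rw [← insert_Icc_add_one_left_eq_Icc (by grind), prod_insert (by simp)]
  rw [hlvl, hlvl, ← insert_Icc_add_one_left_eq_Icc (by omega : s ≤ q - 1),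
    sum_insert (by simp), Icc_self, prod_singleton, sum_congr rfl hprod, ← mul_sum]
  ring

/-- `x s, …, x (s + d - 1)` are the child indices along a path from a vertex at level `s`
down `d` levels. -/
def IsAddress (q : ℕ) (k : ℕ → ℕ) (s d : ℕ) (x : ℕ → ℕ) : Prop :=
  s + d ≤ q ∧ ∀ i ∈ Set.Ico s (s + d), x i < k i

def block (k : ℕ → ℕ) (s d : ℕ) (x : ℕ → ℕ) : ℤ :=
  if Even d then x s else k s - 1 - x s

def subtreeLabel (q : ℕ) (k : ℕ → ℕ) : ℕ → ℕ → (ℕ → ℕ) → ℤ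
  | s, 0, _ => hlvl q k s
  | s, d + 1, x => (block k s d x + 1) * hlvl q k (s + 1) + 1 - subtreeLabel q k (s + 1) d x

variable {s d d' : ℕ} {x x' : ℕ → ℕ}

@[simp] lemma subtreeLabel_zero : subtreeLabel q k s 0 x = hlvl q k s := rfl

namespace IsAddress

lemma head_lt (hx : IsAddress q k s (d + 1) x) : x s < k s :=
  hx.2 s ⟨le_rfl, by omega⟩

lemma tail (hx : IsAddress q k s (d + 1) x) : IsAddress q k (s + 1) d x :=
  ⟨by have := hx.1; omega, fun i hi => hx.2 i ⟨by grind, by grind⟩⟩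

lemma of_succ (hx : IsAddress q k s (d + 1) x) : IsAddress q k s d x :=
  ⟨by have := hx.1; omega, fun i hi => hx.2 i ⟨hi.1, by grind⟩⟩

end IsAddress

lemma eqOn_Ico_of_head_tail (hs : x s = x' s)
    (ht : Set.EqOn x x' (Set.Ico (s + 1) (s + 1 + d))) :
    Set.EqOn x x' (Set.Ico s (s + (d + 1))) := fun i hi => by
  rcases eq_or_lt_of_le hi.1 with rfl | h
  · exact hs
  · exact ht ⟨h, by grind⟩

lemma block_mem_Icc (hx : IsAddress q k s (d + 1) x) :
    block k s d x ∈ Set.Icc 0 (k s - 1 : ℤ) := by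
  have := hx.head_lt
  unfold block
  split_ifs <;> constructor <;> omega

lemma block_succ_add_block : block k s (d + 1) x + block k s d x = k s - 1 := by
  unfold block
  split_ifs <;> grind

lemma block_succ_sub_block_emod_two :
    (block k s (d + 1) x - block k s d x) % 2 = (k s - 1) % 2 := by
  unfold block
  split_ifs <;> grind

lemma head_eq_of_block_eq (h : block k s d x = block k s d x') : x s = x' s := by
  unfold block at h
  split_ifs at h <;> omega

lemma head_eq_of_block_sub_eq
    (h : block k s (d + 1) x - block k s d x = block k s (d + 1) x' - block k s d x') :
    x s = x' s := by
  unfold block at h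
  split_ifs at h <;> grind

lemma subtreeLabel_congr (h : Set.EqOn x x' (Set.Ico s (s + d))) :
    subtreeLabel q k s d x = subtreeLabel q k s d x' := by
  induction d generalizing s with
  | zero => rfl
  | succ d ih =>
    have hs : x s = x' s := h ⟨le_rfl, by omega⟩
    simp only [subtreeLabel, block, hs,
      ih (h.mono (Set.Ico_subset_Ico (by omega) (by omega)) : Set.EqOn x x' (Set.Ico (s + 1) _))]

lemma subtreeLabel_mem_Icc (hx : IsAddress q k s d x) :
    subtreeLabel q k s d x ∈ Set.Icc 1 (hlvl q k s : ℤ) := by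
  induction d generalizing s with
  | zero => simpa using one_le_hlvl s
  | succ d ih =>
    obtain ⟨hm₁, hm₂⟩ := ih hx.tail
    obtain ⟨hb₀, hb₁⟩ := block_mem_Icc hx
    rw [subtreeLabel, hlvl_eq_one_add_mul (show s + 1 ≤ q by have := hx.1; omega)]
    push_cast
    constructor <;> nlinarith

lemma subtreeLabel_succ_mem_block (hx : IsAddress q k s (d + 1) x) :
    block k s d x * hlvl q k (s + 1) + 1 ≤ subtreeLabel q k s (d + 1) x ∧
      subtreeLabel q k s (d + 1) x ≤ (block k s d x + 1) * hlvl q k (s + 1) := by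
  obtain ⟨hm₁, hm₂⟩ := subtreeLabel_mem_Icc hx.tail
  rw [subtreeLabel]
  constructor <;> linarith

lemma subtreeLabel_succ_lt (hx : IsAddress q k s (d + 1) x) :
    subtreeLabel q k s (d + 1) x < hlvl q k s := by
  have := (subtreeLabel_succ_mem_block hx).2
  have := (block_mem_Icc hx).2
  rw [hlvl_eq_one_add_mul (show s + 1 ≤ q by have := hx.1; omega)]
  push_cast
  nlinarith [(hlvl q k (s + 1)).cast_nonneg (α := ℤ)]

theorem eq_of_subtreeLabel_eq (hx : IsAddress q k s d x) (hx' : IsAddress q k s d' x')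
    (h : subtreeLabel q k s d x = subtreeLabel q k s d' x') :
    d = d' ∧ Set.EqOn x x' (Set.Ico s (s + d)) := by
  induction d generalizing s d' with
  | zero =>
    cases d' with
    | zero => exact ⟨rfl, by simp⟩
    | succ d' =>
      have := subtreeLabel_succ_lt hx'
      rw [subtreeLabel_zero] at h
      omega
  | succ d ih =>
    cases d' with
    | zero =>
      have := subtreeLabel_succ_lt hx
      rw [subtreeLabel_zero] at h
      omega
    | succ d' =>
      obtain ⟨hm₁, hm₂⟩ := subtreeLabel_mem_Icc hx.tail
      obtain ⟨hm₁', hm₂'⟩ := subtreeLabel_mem_Icc hx'.tail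
      set H : ℤ := (hlvl q k (s + 1) : ℤ)
      set m := subtreeLabel q k (s + 1) d x
      set m' := subtreeLabel q k (s + 1) d' x'
      obtain ⟨hb, hr⟩ := Int.eq_and_eq_of_mul_add_eq_mul_add (n := 1) (by omega) (one_dvd _)
        (by rw [abs_lt]; constructor <;> linarith)
        (by simp only [subtreeLabel] at h; linear_combination h :
          block k s d x * H + (H - m) = block k s d' x' * H + (H - m'))
      obtain ⟨rfl, htail⟩ := ih hx.tail hx'.tail (by omega)
      exact ⟨rfl, eqOn_Ico_of_head_tail (head_eq_of_block_eq hb) htail⟩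

lemma subtreeLabel_one_sub_zero (hs : s + 1 ≤ q) :
    subtreeLabel q k s 1 x - subtreeLabel q k s 0 x = (x s - k s) * hlvl q k (s + 1) := by
  simp only [subtreeLabel, block, hlvl_eq_one_add_mul hs, if_pos Even.zero]
  push_cast
  ring

lemma subtreeLabel_succ_succ_sub :
    subtreeLabel q k s (d + 2) x - subtreeLabel q k s (d + 1) x =
      (block k s (d + 1) x - block k s d x) * hlvl q k (s + 1) -
        (subtreeLabel q k (s + 1) (d + 1) x - subtreeLabel q k (s + 1) d x) := by
  simp only [subtreeLabel]
  ring

lemma abs_subtreeLabel_succ_sub_lt (hx : IsAddress q k s (d + 1) x) :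
    |subtreeLabel q k s (d + 1) x - subtreeLabel q k s d x| < hlvl q k s := by
  obtain ⟨h₁, h₂⟩ := subtreeLabel_mem_Icc hx
  obtain ⟨h₁', h₂'⟩ := subtreeLabel_mem_Icc hx.of_succ
  rw [abs_lt]
  constructor <;> linarith

lemma subtreeLabel_succ_sub_ne_zero (hx : IsAddress q k s (d + 1) x) :
    subtreeLabel q k s (d + 1) x - subtreeLabel q k s d x ≠ 0 := fun h =>
  absurd (eq_of_subtreeLabel_eq hx hx.of_succ (sub_eq_zero.mp h)).1 (by omega)

lemma hlvl_dvd_subtreeLabel_succ_sub_iff (hx : IsAddress q k s (d + 1) x) :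
    (hlvl q k (s + 1) : ℤ) ∣ subtreeLabel q k s (d + 1) x - subtreeLabel q k s d x ↔
      d = 0 := by
  cases d with
  | zero =>
    rw [subtreeLabel_one_sub_zero (show s + 1 ≤ q by have := hx.1; omega)]
    exact iff_of_true (dvd_mul_left _ _) rfl
  | succ d =>
    rw [subtreeLabel_succ_succ_sub, dvd_sub_right (dvd_mul_left _ _)]
    simp only [Nat.add_one_ne_zero, iff_false]
    exact fun h => subtreeLabel_succ_sub_ne_zero hx.tail
      (Int.eq_zero_of_abs_lt_dvd h (abs_subtreeLabel_succ_sub_lt hx.tail))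

lemma eq_zero_iff_of_abs_subtreeLabel_sub_eq (hx : IsAddress q k s (d + 1) x)
    (hx' : IsAddress q k s (d' + 1) x')
    (h : |subtreeLabel q k s (d + 1) x - subtreeLabel q k s d x| =
      |subtreeLabel q k s (d' + 1) x' - subtreeLabel q k s d' x'|) :
    d = 0 ↔ d' = 0 := by
  rw [← hlvl_dvd_subtreeLabel_succ_sub_iff hx, ← hlvl_dvd_subtreeLabel_succ_sub_iff hx',
    ← dvd_abs, h, dvd_abs]

lemma head_eq_of_abs_subtreeLabel_one_sub_eq (hx : IsAddress q k s 1 x)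
    (hx' : IsAddress q k s 1 x')
    (h : |subtreeLabel q k s 1 x - subtreeLabel q k s 0 x| =
      |subtreeLabel q k s 1 x' - subtreeLabel q k s 0 x'|) :
    x s = x' s := by
  have hH : (0 : ℤ) < hlvl q k (s + 1) := by exact_mod_cast one_le_hlvl (s + 1)
  have hs : s + 1 ≤ q := hx.1
  have := hx.head_lt
  have := hx'.head_lt
  rw [subtreeLabel_one_sub_zero hs, subtreeLabel_one_sub_zero hs, abs_mul, abs_mul,
    abs_of_pos hH, abs_of_neg (by omega : (x s : ℤ) - k s < 0),
    abs_of_neg (by omega : (x' s : ℤ) - k s < 0)] at h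
  have := mul_right_cancel₀ hH.ne' h
  omega

theorem eq_of_abs_subtreeLabel_sub_eq (hx : IsAddress q k s (d + 1) x)
    (hx' : IsAddress q k s (d' + 1) x')
    (h : |subtreeLabel q k s (d + 1) x - subtreeLabel q k s d x| =
      |subtreeLabel q k s (d' + 1) x' - subtreeLabel q k s d' x'|) :
    d = d' ∧ Set.EqOn x x' (Set.Ico s (s + (d + 1))) := by
  induction d generalizing s d' with
  | zero =>
    obtain rfl := (eq_zero_iff_of_abs_subtreeLabel_sub_eq hx hx' h).1 rfl
    refine ⟨rfl, ?_⟩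
    simp only [zero_add, Set.Ico_add_one_right_eq_Icc, Set.Icc_self, Set.eqOn_singleton]
    exact head_eq_of_abs_subtreeLabel_one_sub_eq hx hx' h
  | succ d ih =>
    obtain ⟨d', rfl⟩ := Nat.exists_eq_add_one_of_ne_zero
      (mt (eq_zero_iff_of_abs_subtreeLabel_sub_eq hx hx' h).2 d.add_one_ne_zero)
    rw [subtreeLabel_succ_succ_sub, subtreeLabel_succ_succ_sub] at h
    have hpar := block_succ_sub_block_emod_two (k := k) (s := s) (d := d) (x := x)
    have hpar' := block_succ_sub_block_emod_two (k := k) (s := s) (d := d') (x := x')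
    rcases Int.eq_or_eq_neg_of_abs_mul_sub_eq (by exact_mod_cast one_le_hlvl (s + 1))
      (by omega) (by omega) (abs_subtreeLabel_succ_sub_lt hx.tail)
      (abs_subtreeLabel_succ_sub_lt hx'.tail) h with ⟨ha, he⟩ | ⟨-, he⟩
    · obtain ⟨rfl, htail⟩ := ih hx.tail hx'.tail (by rw [he])
      exact ⟨rfl, eqOn_Ico_of_head_tail (head_eq_of_block_sub_eq ha) htail⟩
    · obtain ⟨rfl, htail⟩ := ih hx.tail hx'.tail (by rw [he, abs_neg])
      rw [subtreeLabel_congr htail, subtreeLabel_congr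
        (htail.mono (Set.Ico_subset_Ico le_rfl (by omega)) :
          Set.EqOn x x' (Set.Ico (s + 1) (s + 1 + d)))] at he
      exact absurd (by linarith) (subtreeLabel_succ_sub_ne_zero hx'.tail)

lemma subtreeLabel_weakly_alpha (hks : k s = 2) (hx : IsAddress q k s (d + 1) x) :
    (subtreeLabel q k s (d + 1) x ≤ hlvl q k (s + 1) + 1 ∧
        hlvl q k (s + 1) + 1 ≤ subtreeLabel q k s d x) ∨
      (subtreeLabel q k s d x ≤ hlvl q k (s + 1) + 1 ∧
        hlvl q k (s + 1) + 1 ≤ subtreeLabel q k s (d + 1) x) := by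
  cases d with
  | zero =>
    have := hx.head_lt
    have hH : (0 : ℤ) ≤ hlvl q k (s + 1) := by positivity
    left
    simp only [subtreeLabel, block, if_pos Even.zero, hks,
      hlvl_eq_one_add_mul (show s + 1 ≤ q by have := hx.1; omega)]
    push_cast
    constructor <;> nlinarith
  | succ d =>
    obtain ⟨hb₀, hb₁⟩ := block_mem_Icc hx
    have hsum := block_succ_add_block (k := k) (s := s) (d := d) (x := x)
    have hψ := subtreeLabel_succ_mem_block hx
    have hψ' := subtreeLabel_succ_mem_block hx.of_succ
    rw [hks] at hb₁ hsum
    rcases (show block k s (d + 1) x = 0 ∨ block k s (d + 1) x = 1 by omega) with h | h <;>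
      rw [h] at hψ <;> rw [show block k s d x = 1 - block k s (d + 1) x by omega, h] at hψ'
    · left; constructor <;> linarith
    · right; constructor <;> linarith

lemma subtreeLabel_eq_sum (hd : s + d ≤ q) :
    subtreeLabel q k s d x =
      let S := ∑ i ∈ Ico s (s + d), (x i : ℤ) * hlvl q k (i + 1)
      if Even d then hlvl q k s - S - (d / 2 : ℕ) else S + ((d + 1) / 2 : ℕ) := by
  induction d generalizing s with
  | zero => simp
  | succ d ih =>
    rw [subtreeLabel, ih (by omega), sum_eq_sum_Ico_succ_bot (show s < s + (d + 1) by omega),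
      show s + (d + 1) = s + 1 + d by ring]
    rcases Nat.even_or_odd' d with ⟨m, rfl | rfl⟩
    · have h₁ : (2 * m + 1 + 1) / 2 = m + 1 := by omega
      simp only [block, even_two, Even.mul_right, ↓reduceIte, Nat.not_even_bit1, h₁,
        mul_div_cancel_left₀ _ two_ne_zero, Nat.cast_add, Nat.cast_one]
      ring
    · have h₂ : (2 * m + 1 + 1) = 2 * (m + 1) := by ring
      simp only [block, even_two, Even.mul_right, ↓reduceIte, Nat.not_even_bit1, h₂,
        mul_div_cancel_left₀ _ two_ne_zero, hlvl_eq_one_add_mul (show s + 1 ≤ q by omega),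
        Nat.cast_add, Nat.cast_one, Nat.cast_mul]
      ring

section Vertex

variable (v : Vertex q k)

lemma seqOf_lt {i : ℕ} (hi : i ∈ Set.Ico 1 (1 + v.1.val)) : seqOf v i < k i := by
  have hi' : i - 1 < v.1.val := by grind
  rw [seqOf, dif_pos hi']
  convert (v.2 ⟨i - 1, hi'⟩).isLt using 2
  grind

lemma isAddress_seqOf : IsAddress q k 1 v.1.val (seqOf v) :=
  ⟨by have := v.1.isLt; omega, fun _ hi => seqOf_lt v hi⟩

lemma eqOn_seqOf_parent :
    Set.EqOn (seqOf (parent v)) (seqOf v) (Set.Ico 1 (1 + (v.1.val - 1))) := fun i hi => by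
  have hi' : i - 1 < v.1.val - 1 := by grind
  rw [seqOf, seqOf, dif_pos (show i - 1 < (parent v).1.val from hi'),
    dif_pos (show i - 1 < v.1.val by omega)]
  rfl

variable {v} in
lemma Vertex.ext_of_seqOf {w : Vertex q k} (h : v.1.val = w.1.val)
    (hx : Set.EqOn (seqOf v) (seqOf w) (Set.Ico 1 (1 + v.1.val))) : v = w := by
  obtain ⟨⟨r, hr⟩, f⟩ := v
  obtain ⟨⟨r', hr'⟩, g⟩ := w
  obtain rfl : r = r' := h
  congr
  funext j
  have := hx (show j.val + 1 ∈ Set.Ico 1 (1 + r) by grind)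
  simpa [seqOf, Fin.ext_iff] using this

lemma flabel_eq : (flabel q k v : ℤ) = hlvl q k 1 - subtreeLabel q k 1 v.1.val (seqOf v) := by
  have hq : 1 + v.1.val ≤ q := by have := v.1.isLt; omega
  have hψ := subtreeLabel_mem_Icc (isAddress_seqOf v)
  rw [Set.mem_Icc, subtreeLabel_eq_sum hq] at hψ
  rw [subtreeLabel_eq_sum hq]
  have hIcc (a : ℕ) : Icc a (v.1.val + 1 - 1) = Ico a (1 + v.1.val) := by
    ext
    simp only [mem_Icc, mem_Ico]
    omega
  simp only [flabel, level, fOdd, fEven, hIcc, Nat.even_add_one]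
  rcases Nat.even_or_odd' v.1.val with ⟨m, hm | hm⟩ <;> rw [hm] at hψ ⊢
  · simp only [even_two, Even.mul_right, not_true_eq_false, ↓reduceIte, add_tsub_cancel_right,
      mul_div_cancel_left₀ _ two_ne_zero, Nat.cast_add, Nat.cast_sum, Nat.cast_mul]
    ring
  · -- `fEven` is a truncated difference in `ℕ`; `ψ ≤ h_1` shows that nothing is truncated
    have hx₁ : seqOf v 1 < k 1 := seqOf_lt v (by simp [hm])
    have h₁ : hlvl q k 1 = 1 + k 1 * hlvl q k 2 := hlvl_eq_one_add_mul (by omega)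
    rw [show (2 * m + 1 + 1) / 2 = m + 1 by omega] at hψ ⊢
    simp only [Nat.not_even_bit1, ↓reduceIte, Nat.reduceSubDiff, not_false_eq_true, h₁,
      mul_div_cancel_left₀ _ two_ne_zero, Nat.cast_add, Nat.cast_one, Nat.cast_mul] at hψ ⊢
    rw [sum_eq_sum_Ico_succ_bot (show 1 < 1 + (2 * m + 1) by omega)] at hψ ⊢
    set T := ∑ i ∈ Ico 2 (1 + (2 * m + 1)), seqOf v i * hlvl q k (i + 1)
    have hTz :
        (T : ℤ) = ∑ i ∈ Ico 2 (1 + (2 * m + 1)), (seqOf v i : ℤ) * hlvl q k (i + 1) := by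
      simp only [T, Nat.cast_sum, Nat.cast_mul]
    have hT : T + m ≤ (k 1 - seqOf v 1) * hlvl q k 2 := by
      zify [hx₁.le]
      linarith
    rw [Nat.sub_sub, Nat.cast_sub hT]
    push_cast [Nat.cast_sub hx₁.le, hTz]
    ring

lemma flabel_parent_eq :
    (flabel q k (parent v) : ℤ) = hlvl q k 1 - subtreeLabel q k 1 (v.1.val - 1) (seqOf v) := by
  rw [flabel_eq]
  exact congrArg _ (subtreeLabel_congr (eqOn_seqOf_parent v))

variable {v} in
lemma glabel_eq (hv : v.1.val = d + 1) :
    (glabel q k v : ℤ) =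
      |subtreeLabel q k 1 (d + 1) (seqOf v) - subtreeLabel q k 1 d (seqOf v)| := by
  rw [glabel, Int.natCast_natAbs, flabel_eq, flabel_parent_eq, hv, abs_sub_comm,
    Nat.add_sub_cancel]
  ring_nf

end Vertex

end SymmetricTree

open SymmetricTree in
theorem weakly_alpha_of_k1_eq_two_general (q : ℕ) (k : ℕ → ℕ) (hk1 : k 1 = 2) :
    Function.Injective (flabel q k) ∧
    (∀ v : Vertex q k, flabel q k v ≤ hlvl q k 1 - 1) ∧
    (∀ v w : Vertex q k, 0 < v.1.val → 0 < w.1.val →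
      glabel q k v = glabel q k w → v = w) ∧
    (∀ v : Vertex q k, 0 < v.1.val →
      (flabel q k v ≤ hlvl q k 2 ∧ hlvl q k 2 ≤ flabel q k (parent v)) ∨
      (flabel q k (parent v) ≤ hlvl q k 2 ∧ hlvl q k 2 ≤ flabel q k v)) := by
  refine ⟨fun v w h => ?_, fun v => ?_, fun v w hv hw h => ?_, fun v hv => ?_⟩
  · have hvw := flabel_eq v
    rw [h, flabel_eq w] at hvw
    obtain ⟨hd, hx⟩ :=
      eq_of_subtreeLabel_eq (isAddress_seqOf v) (isAddress_seqOf w) (by linarith)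
    exact Vertex.ext_of_seqOf hd hx
  · have := flabel_eq v
    have := (subtreeLabel_mem_Icc (isAddress_seqOf v)).1
    omega
  · obtain ⟨d, hd⟩ := Nat.exists_eq_add_one_of_ne_zero hv.ne'
    obtain ⟨d', hd'⟩ := Nat.exists_eq_add_one_of_ne_zero hw.ne'
    obtain ⟨rfl, hx⟩ := eq_of_abs_subtreeLabel_sub_eq (hd ▸ isAddress_seqOf v)
      (hd' ▸ isAddress_seqOf w) (by rw [← glabel_eq hd, ← glabel_eq hd', h])
    exact Vertex.ext_of_seqOf (hd.trans hd'.symm) (hd ▸ hx)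
  · obtain ⟨d, hd⟩ := Nat.exists_eq_add_one_of_ne_zero hv.ne'
    have hψ := subtreeLabel_weakly_alpha hk1 (hd ▸ isAddress_seqOf v)
    have hf := flabel_eq v
    have hp := flabel_parent_eq v
    rw [hd] at hf
    rw [hd, Nat.add_sub_cancel] at hp
    have h₁ : hlvl q k 1 = 1 + k 1 * hlvl q k 2 :=
      hlvl_eq_one_add_mul (by have := v.1.isLt; omega)
    rw [hk1] at h₁
    simp only [Nat.reduceAdd] at hψ
    omega

/-- Lemma: for a rooted symmetric tree with daughter degree sequence
`(2, k 2, k 3, …)`, the graceful labelling `f` of Theorem 1 is a weakly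
α-labelling with critical value `k = h 2`: it is graceful and every edge `xy`
(joining a non-root vertex to its parent) satisfies `f x ≤ h 2 ≤ f y` or
`f y ≤ h 2 ≤ f x`. -/
theorem weakly_alpha_of_k1_eq_two (q : ℕ) (k : ℕ → ℕ) (hq : 1 ≤ q)
    (hk : ∀ i, 1 ≤ k i) (hk1 : k 1 = 2) :
    Function.Injective (flabel q k) ∧
    (∀ v : Vertex q k, flabel q k v ≤ hlvl q k 1 - 1) ∧
    (∀ v w : Vertex q k, 0 < v.1.val → 0 < w.1.val →
      glabel q k v = glabel q k w → v = w) ∧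
    (∀ v : Vertex q k, 0 < v.1.val →
      (flabel q k v ≤ hlvl q k 2 ∧ hlvl q k 2 ≤ flabel q k (parent v)) ∨
      (flabel q k (parent v) ≤ hlvl q k 2 ∧ hlvl q k 2 ≤ flabel q k v)) :=
  weakly_alpha_of_k1_eq_two_general q k hk1
end

section
/- Every complete binary tree (rooted symmetric tree with daughter degree sequence (2,2,...,2)) admits a weakly α-labelling. -/
/-!
Address a vertex of the complete binary tree of depth `q + 1` as `b :: t`: `b` is the child of
the root whose subtree (complete of depth `q`, with `M = 2 ^ q - 1` vertices) contains it and `t`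
is its address there. The root gets `0` and `b :: t` gets `c * M - L t`, where `L` is the
labelling in depth `q` and `c ∈ {1, 2}` is chosen by the parity of `b + |t|`. As `L` takes values
in `[0, M)`, the two subtrees fill the blocks `[1, M]` and `[M + 1, 2 * M]` in a checkerboard
pattern, so the ends of every edge lie on either side of `M`. An edge that had difference `d` in
depth `q` gets label `M ± d`, with opposite signs in the two subtrees, and the two edges at the
root get `M` and `2 * M`; by induction all edge labels are distinct.
-/

def binaryLabel : ℕ → List (Fin 2) → ℕ
  | _, [] => 0
  | 0, _ :: _ => 0 -- junk: only addresses of length `< q` are vertices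
  | q + 1, b :: t => (if Even (b.val + t.length) then 2 else 1) * (2 ^ q - 1) - binaryLabel q t

theorem binaryLabel_nil (q : ℕ) : binaryLabel q [] = 0 := by
  cases q <;> rfl

theorem binaryLabel_le (q : ℕ) (l : List (Fin 2)) : binaryLabel q l ≤ 2 ^ q - 2 := by
  match q, l with
  | _, [] | 0, _ :: _ => simp [binaryLabel]
  | q + 1, b :: t =>
    have hc : (if Even (b.val + t.length) then 2 else 1) ≤ 2 := by split_ifs <;> omega
    calc binaryLabel (q + 1) (b :: t)
        ≤ (if Even (b.val + t.length) then 2 else 1) * (2 ^ q - 1) := Nat.sub_le _ _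
      _ ≤ 2 * (2 ^ q - 1) := Nat.mul_le_mul_right _ hc
      _ = 2 ^ (q + 1) - 2 := by rw [pow_succ]; omega

theorem binaryLabel_lt {q : ℕ} {l : List (Fin 2)} (hl : l.length < q) :
    (binaryLabel q l : ℤ) < 2 ^ q - 1 := by
  have h := binaryLabel_le q l
  have h2 : 2 ≤ 2 ^ q := Nat.le_self_pow (by omega) 2
  zify [h2] at h
  omega

theorem binaryLabel_succ_cons (q : ℕ) (b : Fin 2) (t : List (Fin 2)) :
    (binaryLabel (q + 1) (b :: t) : ℤ) =
      (if Even (b.val + t.length) then 2 else 1) * (2 ^ q - 1) - binaryLabel q t := by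
  have h := binaryLabel_le q t
  have h2q : 1 ≤ 2 ^ q := Nat.one_le_two_pow
  rw [binaryLabel]
  split_ifs <;> rw [Nat.cast_sub (by omega), Nat.cast_mul, Nat.cast_sub h2q] <;> push_cast <;> ring

theorem binaryLabel_cons_pos {q : ℕ} (b : Fin 2) {t : List (Fin 2)} (hl : t.length + 1 < q) :
    0 < binaryLabel q (b :: t) := by
  obtain ⟨q, rfl⟩ : ∃ p, q = p + 1 := Nat.exists_eq_add_one.mpr (by omega)
  have e := binaryLabel_succ_cons q b t
  have := binaryLabel_lt (q := q) (l := t) (by omega)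
  split_ifs at e <;> omega

theorem binaryLabel_injOn (q : ℕ) : Set.InjOn (binaryLabel q) {l | l.length < q} := by
  induction q with
  | zero => intro l hl; simp at hl
  | succ q ih =>
    rintro (_ | ⟨b, t⟩) hl (_ | ⟨b', t'⟩) hl' h
    · rfl
    · exact absurd h (binaryLabel_cons_pos b' hl').ne
    · exact absurd h (binaryLabel_cons_pos b hl).ne'
    · have hlt : t.length < q := by simpa using hl
      have hlt' : t'.length < q := by simpa using hl'
      have e := binaryLabel_succ_cons q b t
      have e' := binaryLabel_succ_cons q b' t'
      have := binaryLabel_lt hlt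
      have := binaryLabel_lt hlt'
      rw [h] at e
      obtain rfl : t = t' := ih hlt hlt' (by split_ifs at e e' <;> omega)
      simp only [Nat.even_iff] at e e'
      congr 1
      split_ifs at e e' <;> omega

def binaryLabelDiff (q : ℕ) (l : List (Fin 2)) : ℤ :=
  binaryLabel q l - binaryLabel q l.dropLast

theorem binaryLabelDiff_succ_singleton (q : ℕ) (b : Fin 2) :
    binaryLabelDiff (q + 1) [b] = (if b = 0 then 2 else 1) * (2 ^ q - 1) := by
  rw [binaryLabelDiff, List.dropLast_singleton, binaryLabel_succ_cons]
  fin_cases b <;> simp [binaryLabel_nil]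

theorem binaryLabelDiff_succ_cons (q : ℕ) (b : Fin 2) {t : List (Fin 2)} (ht : t ≠ []) :
    binaryLabelDiff (q + 1) (b :: t) =
      (if Even (b.val + t.length) then 1 else -1) * (2 ^ q - 1) - binaryLabelDiff q t := by
  have e := binaryLabel_succ_cons q b t
  have e' := binaryLabel_succ_cons q b t.dropLast
  have hlen : 0 < t.length := List.length_pos_iff.mpr ht
  rw [binaryLabelDiff, List.dropLast_cons_of_ne_nil ht, e, e', binaryLabelDiff]
  simp only [Nat.even_iff, List.length_dropLast]
  split_ifs <;> omega

theorem binaryLabelDiff_ne_zero {q : ℕ} {l : List (Fin 2)} (hne : l ≠ []) (hl : l.length < q) :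
    binaryLabelDiff q l ≠ 0 := by
  have hlen : l.dropLast.length < l.length := by
    simp [List.length_pos_iff.mpr hne]
  have hlabel : binaryLabel q l ≠ binaryLabel q l.dropLast := fun h =>
    hlen.ne' (congrArg List.length (binaryLabel_injOn q hl (hlen.trans hl) h))
  rw [binaryLabelDiff, sub_ne_zero]
  exact_mod_cast hlabel

theorem abs_binaryLabelDiff_lt {q : ℕ} {l : List (Fin 2)} (hl : l.length < q) :
    |binaryLabelDiff q l| < 2 ^ q - 1 := by
  have h := binaryLabel_lt hl
  have h' := binaryLabel_lt (q := q) (l := l.dropLast) (by rw [List.length_dropLast]; omega)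
  rw [binaryLabelDiff, abs_lt]
  constructor <;> omega

theorem natAbs_binaryLabelDiff_injOn (q : ℕ) :
    Set.InjOn (fun l => (binaryLabelDiff q l).natAbs) {l | l ≠ [] ∧ l.length < q} := by
  induction q with
  | zero => rintro l ⟨-, hl⟩; simp at hl
  | succ q ih =>
    rintro (_ | ⟨b, t⟩) ⟨hne, hl⟩ (_ | ⟨b', t'⟩) ⟨hne', hl'⟩ h
    · rfl
    · exact absurd rfl hne
    · exact absurd rfl hne'
    have hlt : t.length < q := by simpa using hl
    have hlt' : t'.length < q := by simpa using hl'
    have hM : 1 ≤ (2 : ℤ) ^ q - 1 := by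
      have : (2 : ℤ) ≤ 2 ^ q := le_self_pow₀ (by norm_num) (by simp at hl; omega)
      omega
    simp only at h
    rcases eq_or_ne t [] with rfl | ht <;> rcases eq_or_ne t' [] with rfl | ht'
    · rw [binaryLabelDiff_succ_singleton, binaryLabelDiff_succ_singleton] at h
      congr 1
      split_ifs at h <;> omega
    · rw [binaryLabelDiff_succ_singleton, binaryLabelDiff_succ_cons q b' ht'] at h
      have := binaryLabelDiff_ne_zero ht' hlt'
      have := abs_lt.mp (abs_binaryLabelDiff_lt hlt')
      split_ifs at h <;> omega
    · rw [binaryLabelDiff_succ_singleton, binaryLabelDiff_succ_cons q b ht] at h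
      have := binaryLabelDiff_ne_zero ht hlt
      have := abs_lt.mp (abs_binaryLabelDiff_lt hlt)
      split_ifs at h <;> omega
    · rw [binaryLabelDiff_succ_cons q b ht, binaryLabelDiff_succ_cons q b' ht'] at h
      have := binaryLabelDiff_ne_zero ht hlt
      have := abs_lt.mp (abs_binaryLabelDiff_lt hlt)
      have := abs_lt.mp (abs_binaryLabelDiff_lt hlt')
      obtain rfl : t = t' := ih ⟨ht, hlt⟩ ⟨ht', hlt'⟩ (by beta_reduce; split_ifs at h <;> omega)
      simp only [Nat.even_iff] at h
      congr 1
      split_ifs at h <;> omega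

theorem binaryLabel_straddle {q : ℕ} {l : List (Fin 2)} (hne : l ≠ []) (hl : l.length < q) :
    (binaryLabel q l ≤ 2 ^ (q - 1) - 1 ∧ 2 ^ (q - 1) - 1 ≤ binaryLabel q l.dropLast) ∨
      (binaryLabel q l.dropLast ≤ 2 ^ (q - 1) - 1 ∧ 2 ^ (q - 1) - 1 ≤ binaryLabel q l) := by
  obtain ⟨b, t, rfl⟩ := List.exists_cons_of_ne_nil hne
  obtain ⟨q, rfl⟩ : ∃ p, q = p + 1 := Nat.exists_eq_add_one.mpr (by simp at hl; omega)
  have hlt : t.length < q := by simpa using hl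
  have e := binaryLabel_succ_cons q b t
  have := binaryLabel_lt hlt
  have h2q : ((2 ^ q - 1 : ℕ) : ℤ) = 2 ^ q - 1 := by push_cast [Nat.one_le_two_pow]; ring
  rw [Nat.add_sub_cancel]
  rcases eq_or_ne t [] with rfl | ht
  · rw [binaryLabel_nil, List.length_nil, add_zero] at e
    rw [List.dropLast_singleton, binaryLabel_nil]
    split_ifs at e <;> omega
  · have e' := binaryLabel_succ_cons q b t.dropLast
    have := binaryLabel_lt (q := q) (l := t.dropLast) (by rw [List.length_dropLast]; omega)
    have hlen : 0 < t.length := List.length_pos_iff.mpr ht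
    rw [List.dropLast_cons_of_ne_nil ht]
    simp only [Nat.even_iff, List.length_dropLast] at e e'
    split_ifs at e e' <;> omega

namespace Vertex

variable {q n : ℕ}

def toList (v : Vertex q fun _ => n) : List (Fin n) := List.ofFn v.2

theorem length_toList (v : Vertex q fun _ => n) : v.toList.length = v.1.val :=
  List.length_ofFn

theorem toList_injective : Function.Injective (toList : Vertex q (fun _ => n) → List (Fin n)) := by
  rintro ⟨r, x⟩ ⟨r', x'⟩ h
  obtain ⟨hr, hx⟩ := Sigma.mk.inj_iff.mp (List.ofFn_inj'.mp h)
  obtain rfl : r = r' := Fin.ext hr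
  cases heq_iff_eq.mp hx
  rfl

theorem toList_parent (v : Vertex q fun _ => n) : (parent v).toList = v.toList.dropLast := by
  apply List.ext_getElem
  · simp [toList, parent]
  · intro i h1 h2
    simp [toList, parent, List.getElem_dropLast, Fin.castLE]

theorem card_eq_sum_pow : Fintype.card (Vertex q fun _ => n) = ∑ r ∈ Finset.range q, n ^ r := by
  change Fintype.card (Σ r : Fin q, Fin r → Fin n) = _
  rw [Fintype.card_sigma, ← Fin.sum_univ_eq_sum_range]
  simp

end Vertex

theorem binary_tree_weakly_alpha_general (q : ℕ) :
    ∃ (f : Vertex q (fun _ => 2) → ℕ) (c : ℕ),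
      Function.Injective f ∧
      (∀ v, f v ≤ Fintype.card (Vertex q (fun _ => 2)) - 1) ∧
      (∀ v w : Vertex q (fun _ => 2), 0 < v.1.val → 0 < w.1.val →
        ((f v : ℤ) - (f (parent v) : ℤ)).natAbs =
          ((f w : ℤ) - (f (parent w) : ℤ)).natAbs → v = w) ∧
      (∀ v : Vertex q (fun _ => 2), 0 < v.1.val →
        (f v ≤ c ∧ c ≤ f (parent v)) ∨ (f (parent v) ≤ c ∧ c ≤ f v)) := by
  have hlen (v : Vertex q fun _ => 2) : v.toList.length < q := v.length_toList ▸ v.1.isLt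
  have hne (v : Vertex q fun _ => 2) (hv : 0 < v.1.val) : v.toList ≠ [] :=
    List.ne_nil_of_length_pos (v.length_toList ▸ hv)
  refine ⟨fun v => binaryLabel q v.toList, 2 ^ (q - 1) - 1, ?_, ?_, ?_, ?_⟩
  · exact fun v w h => Vertex.toList_injective (binaryLabel_injOn q (hlen v) (hlen w) h)
  · intro v
    rw [Vertex.card_eq_sum_pow, Nat.geomSum_eq le_rfl, Nat.div_one]
    exact (binaryLabel_le q _).trans (by omega)
  · intro v w hv hw h
    simp only [Vertex.toList_parent] at h
    exact Vertex.toList_injective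
      (natAbs_binaryLabelDiff_injOn q ⟨hne v hv, hlen v⟩ ⟨hne w hw, hlen w⟩ h)
  · intro v hv
    simpa only [Vertex.toList_parent] using binaryLabel_straddle (hne v hv) (hlen v)

/-- Every complete binary tree (rooted symmetric tree with daughter degree
sequence `(2, 2, …, 2)`) admits a weakly α-labelling: a graceful labelling `f`
together with an integer `c` such that every edge `xy` satisfies
`f x ≤ c ≤ f y` or `f y ≤ c ≤ f x`. -/
theorem binary_tree_weakly_alpha (q : ℕ) (hq : 1 ≤ q) :
    ∃ (f : Vertex q (fun _ => 2) → ℕ) (c : ℕ),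
      Function.Injective f ∧
      (∀ v, f v ≤ Fintype.card (Vertex q (fun _ => 2)) - 1) ∧
      (∀ v w : Vertex q (fun _ => 2), 0 < v.1.val → 0 < w.1.val →
        ((f v : ℤ) - (f (parent v) : ℤ)).natAbs =
          ((f w : ℤ) - (f (parent w) : ℤ)).natAbs → v = w) ∧
      (∀ v : Vertex q (fun _ => 2), 0 < v.1.val →
        (f v ≤ c ∧ c ≤ f (parent v)) ∨ (f (parent v) ≤ c ∧ c ≤ f v)) :=
  binary_tree_weakly_alpha_general q
end
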